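/- arXiv:2209.12868 — 7 statements merged into one kernel-verified Lean document; each statement's English description precedes it below -/
import Mathlib

section
/- Φ_𝒩 is differentiable at every Θ ∈ ℝ^ℬ, and its gradient is ∇Φ_𝒩(Θ) = E_{ℓ∼γ}[H(Θ, ℓ)], the expectation of the one-hot vector at the γ-almost-surely unique maximizer of h ↦ Θ[h] + q(ℓ)[h] over ℬ (this expectation does not depend on the choice of measurable selection of maximizers). -/
open MeasureTheory ProbabilityTheory

/-- The product Gaussian measure `γ` on `ℝ^{𝒳×𝒜}` with i.i.d. `N(0,1)` coordinates. -/
noncomputable def gaussianPerturbation (X A : Type*) [Fintype X] [Fintype A] :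
    Measure ((X × A) → ℝ) :=
  Measure.pi fun _ : X × A => gaussianReal 0 1

/-- `Φ_𝒩(Θ) = E_{ℓ∼γ}[max_{h∈ℬ} (Θ[h] + q(ℓ)[h])]`. -/
noncomputable def PhiN {X A B : Type*} [Fintype X] [Fintype A] [Fintype B]
    (pol : B → X → A) (Θ : B → ℝ) : ℝ :=
  ∫ ℓ : (X × A) → ℝ, (⨆ h : B, (Θ h + ∑ x : X, ℓ (x, pol h x)))
    ∂(gaussianPerturbation X A)

/-!
Write `b = sel ℓ` for the maximizer of the scores `Θ[h] + q(ℓ)[h]`. Perturbing `Θ` by `v`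
changes the maximum by `v b` plus an error in `[0, 2‖v‖]`, and the error vanishes unless two
distinct scores lie within `2‖v‖` of each other. Two distinct policies differ at some `x₀`, so
the difference of their scores has coefficient one on the Gaussian coordinate
`ℓ (x₀, pol h x₀)` and is therefore within `2‖v‖` of any given value with probability
`O(‖v‖)`. Hence `Φ_𝒩(Θ + v) - Φ_𝒩(Θ) - E[v (sel ℓ)] = O(‖v‖²)`.
-/

open Real Set Filter Asymptotics
open scoped NNReal ENNReal

namespace ProbabilityTheory

lemma gaussianPDFReal_le_inv_sqrt (μ : ℝ) (v : ℝ≥0) (x : ℝ) :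
    gaussianPDFReal μ v x ≤ (√(2 * π * v))⁻¹ := by
  rw [gaussianPDFReal_def]
  refine mul_le_of_le_one_right (by positivity) (exp_le_one_iff.2 ?_)
  exact div_nonpos_of_nonpos_of_nonneg (neg_nonpos.2 (sq_nonneg _)) (by positivity)

lemma gaussianReal_abs_add_le (μ : ℝ) {v : ℝ≥0} (hv : v ≠ 0) (c t : ℝ) :
    gaussianReal μ v {s | |s + c| ≤ t} ≤ ENNReal.ofReal ((√(2 * π * v))⁻¹ * (2 * t)) := by
  have hIcc : {s : ℝ | |s + c| ≤ t} = Icc (-c - t) (-c + t) := by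
    ext s
    simp only [mem_ofPred_eq, abs_le, mem_Icc]
    constructor <;> rintro ⟨h₁, h₂⟩ <;> constructor <;> linarith
  rw [gaussianReal_apply μ hv, hIcc]
  calc ∫⁻ x in Icc (-c - t) (-c + t), gaussianPDF μ v x
      ≤ ∫⁻ _ in Icc (-c - t) (-c + t), ENNReal.ofReal (√(2 * π * v))⁻¹ :=
        setLIntegral_mono measurable_const fun x _ =>
          ENNReal.ofReal_le_ofReal (gaussianPDFReal_le_inv_sqrt μ v x)
    _ = ENNReal.ofReal ((√(2 * π * v))⁻¹ * (2 * t)) := by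
        rw [setLIntegral_const, volume_Icc, ← ENNReal.ofReal_mul (by positivity)]
        ring_nf

end ProbabilityTheory

namespace MeasureTheory.Measure

/-- Integrating out the coordinate `i` first, `L ℓ + c` is `ℓ i` plus a constant. -/
lemma pi_abs_add_le_of_map_single {ι : Type*} [Fintype ι] [DecidableEq ι]
    {μ : ι → Measure ℝ} [∀ i, IsProbabilityMeasure (μ i)] {i : ι} {t : ℝ} {ε : ℝ≥0∞}
    (hμ : ∀ c, μ i {s | |s + c| ≤ t} ≤ ε) (L : (ι → ℝ) →ₗ[ℝ] ℝ)
    (hL : L (Pi.single i 1) = 1) (c : ℝ) :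
    Measure.pi μ {ℓ | |L ℓ + c| ≤ t} ≤ ε := by
  set S := {ℓ : ι → ℝ | |L ℓ + c| ≤ t}
  have hS : MeasurableSet S :=
    measurableSet_le (L.continuous_of_finiteDimensional.measurable.add_const c).abs
      measurable_const
  have hupdate : ∀ (ℓ : ι → ℝ) (s : ℝ),
      L (Function.update ℓ i s) = s + L (Function.update ℓ i 0) := by
    intro ℓ s
    have : Function.update ℓ i s = s • Pi.single i 1 + Function.update ℓ i 0 := by
      ext j
      by_cases hj : j = i <;> simp [hj]
    rw [this, map_add, map_smul, hL, smul_eq_mul, mul_one]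
  have hslice : ∀ ℓ : ι → ℝ, ∫⁻ s, S.indicator 1 (Function.update ℓ i s) ∂μ i ≤ ε := by
    intro ℓ
    have : (fun s => S.indicator 1 (Function.update ℓ i s)) =
        {s | |s + (L (Function.update ℓ i 0) + c)| ≤ t}.indicator (1 : ℝ → ℝ≥0∞) := by
      ext s
      simp only [S, indicator_apply, mem_ofPred_eq, hupdate ℓ s, add_assoc, Pi.one_apply]
    rw [this, lintegral_indicator_one (measurableSet_le (by fun_prop) measurable_const)]
    exact hμ _
  calc Measure.pi μ S = (∫⋯∫⁻_Finset.univ, S.indicator 1 ∂μ) 0 := by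
        rw [← lintegral_indicator_one hS, lintegral_eq_lmarginal_univ]
    _ = (∫⋯∫⁻_Finset.univ.erase i,
          fun ℓ => ∫⁻ s, S.indicator 1 (Function.update ℓ i s) ∂μ i ∂μ) 0 := by
        rw [lmarginal_erase' _ (measurable_one.indicator hS) (Finset.mem_univ i)]
    _ ≤ (∫⋯∫⁻_Finset.univ.erase i, fun _ => ε ∂μ) 0 := lmarginal_mono hslice 0
    _ = ε := by simp [lmarginal]

end MeasureTheory.Measure

section FiniteSup

variable {ι : Type*} [Fintype ι] {g : ι → ℝ} {b : ι}

lemma ciSup_eq_apply_of_forall_le (hb : ∀ i, g i ≤ g b) : ⨆ i, g i = g b :=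
  have : Nonempty ι := ⟨b⟩
  le_antisymm (ciSup_le hb) (le_ciSup (Finite.bddAbove_range g) b)

variable (v : ι → ℝ)

lemma le_ciSup_add_sub_ciSup (hb : ∀ i, g i ≤ g b) :
    v b ≤ (⨆ i, g i + v i) - ⨆ i, g i := by
  have := le_ciSup (Finite.bddAbove_range fun i => g i + v i) b
  rw [ciSup_eq_apply_of_forall_le hb]
  linarith

lemma ciSup_add_sub_ciSup_le (hb : ∀ i, g i ≤ g b) :
    (⨆ i, g i + v i) - ⨆ i, g i ≤ v b + 2 * ‖v‖ := by
  have hv : ∀ i, |v i| ≤ ‖v‖ := fun i => by simpa using norm_le_pi_norm v i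
  have : Nonempty ι := ⟨b⟩
  have : (⨆ i, g i + v i) ≤ g b + v b + 2 * ‖v‖ := ciSup_le fun i => by
    linarith [hb i, (abs_le.1 (hv i)).2, (abs_le.1 (hv b)).1]
  rw [ciSup_eq_apply_of_forall_le hb]
  linarith

/-- A perturbation smaller than half of every gap `g b - g i` keeps `b` a maximizer. -/
lemma ciSup_add_sub_ciSup_of_forall_gap (hb : ∀ i, g i ≤ g b)
    (hgap : ∀ i, i ≠ b → 2 * ‖v‖ < g b - g i) :
    (⨆ i, g i + v i) - ⨆ i, g i = v b := by
  have hv : ∀ i, |v i| ≤ ‖v‖ := fun i => by simpa using norm_le_pi_norm v i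
  have : ∀ i, g i + v i ≤ g b + v b := fun i => by
    rcases eq_or_ne i b with rfl | hi
    · rfl
    · linarith [hgap i hi, (abs_le.1 (hv i)).2, (abs_le.1 (hv b)).1]
  rw [ciSup_eq_apply_of_forall_le this, ciSup_eq_apply_of_forall_le hb]
  ring

end FiniteSup

lemma integrable_iSup_of_fintype {Ω ι : Type*} [MeasurableSpace Ω] {μ : Measure Ω}
    [Fintype ι] {f : ι → Ω → ℝ} (hf : ∀ i, Integrable (f i) μ) :
    Integrable (fun ω => ⨆ i, f i ω) μ := by
  rcases isEmpty_or_nonempty ι with hι | hι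
  · simp
  have ⟨i₀⟩ := hι
  refine (integrable_finsetSum Finset.univ fun i _ => (hf i).abs).mono'
    (AEMeasurable.iSup fun i => (hf i).aemeasurable).aestronglyMeasurable
    (Eventually.of_forall fun ω => ?_)
  have hle : ∀ i, |f i ω| ≤ ∑ j, |f j ω| := fun i =>
    Finset.single_le_sum (fun j _ => abs_nonneg (f j ω)) (Finset.mem_univ i)
  rw [Real.norm_eq_abs, abs_le]
  exact ⟨(neg_le_neg (hle i₀)).trans <| (neg_abs_le _).trans <|
      le_ciSup (Finite.bddAbove_range fun i => f i ω) i₀,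
    ciSup_le fun i => (le_abs_self _).trans (hle i)⟩

lemma hasFDerivAt_of_norm_sub_le_sq {𝕜 E F : Type*} [NontriviallyNormedField 𝕜]
    [NormedAddCommGroup E] [NormedSpace 𝕜 E] [NormedAddCommGroup F] [NormedSpace 𝕜 F]
    {f : E → F} {f' : E →L[𝕜] F} {x : E} (C : ℝ)
    (hf : ∀ v, ‖f (x + v) - f x - f' v‖ ≤ C * ‖v‖ ^ 2) : HasFDerivAt f f' x :=
  hasFDerivAt_iff_isLittleO_nhds_zero.2 <|
    (IsBigO.of_bound C (Eventually.of_forall fun v => by simpa using hf v)).trans_isLittleO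
      (isLittleO_norm_pow_id one_lt_two)

section Selection

variable {Ω B : Type*} [DecidableEq B] {sel : Ω → B}

lemma apply_eq_sum_ite_mul [Fintype B] (v : B → ℝ) (ω : Ω) :
    v (sel ω) = ∑ h, (if sel ω = h then (1 : ℝ) else 0) * v h := by
  simp

variable [MeasurableSpace Ω] {μ : Measure Ω} [IsFiniteMeasure μ]

lemma integrable_ite_of_measurable
    (hmeas : ∀ h, Measurable fun ω => if sel ω = h then (1 : ℝ) else 0) (h : B) :
    Integrable (fun ω => if sel ω = h then (1 : ℝ) else 0) μ :=
  .of_bound (hmeas h).aestronglyMeasurable 1 (ae_of_all _ fun ω => by split_ifs <;> simp)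

variable [Fintype B]

lemma integrable_comp_of_measurable_ite
    (hmeas : ∀ h, Measurable fun ω => if sel ω = h then (1 : ℝ) else 0) (v : B → ℝ) :
    Integrable (fun ω => v (sel ω)) μ := by
  simp_rw [apply_eq_sum_ite_mul v]
  exact integrable_finsetSum _ fun h _ => (integrable_ite_of_measurable hmeas h).mul_const _

lemma sum_integral_ite_smul_proj_apply
    (hmeas : ∀ h, Measurable fun ω => if sel ω = h then (1 : ℝ) else 0) (v : B → ℝ) :
    (∑ h, (∫ ω, (if sel ω = h then (1 : ℝ) else 0) ∂μ) •
      (ContinuousLinearMap.proj h : (B → ℝ) →L[ℝ] ℝ)) v = ∫ ω, v (sel ω) ∂μ := by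
  simp_rw [apply_eq_sum_ite_mul v]
  rw [integral_finsetSum _ fun h _ => (integrable_ite_of_measurable hmeas h).mul_const _]
  simp only [integral_mul_const, sum_apply, smul_apply, ContinuousLinearMap.proj_apply,
    smul_eq_mul]

end Selection

instance {X A : Type*} [Fintype X] [Fintype A] :
    IsProbabilityMeasure (gaussianPerturbation X A) := by
  unfold gaussianPerturbation
  infer_instance

section PerturbedMax

variable {X A B : Type*} [Fintype X] (pol : B → X → A)

/-- `Θ[h] + q(ℓ)[h]`. -/
def perturbedScore (Θ : B → ℝ) (ℓ : X × A → ℝ) (h : B) : ℝ := Θ h + ∑ x, ℓ (x, pol h x)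

noncomputable def perturbedMax (Θ : B → ℝ) (ℓ : X × A → ℝ) : ℝ :=
  ⨆ h, perturbedScore pol Θ ℓ h

lemma perturbedScore_add (Θ v : B → ℝ) (ℓ : X × A → ℝ) (h : B) :
    perturbedScore pol (Θ + v) ℓ h = perturbedScore pol Θ ℓ h + v h := by
  simp only [perturbedScore, Pi.add_apply]
  ring

lemma perturbedMax_add (Θ v : B → ℝ) (ℓ : X × A → ℝ) :
    perturbedMax pol (Θ + v) ℓ = ⨆ h, perturbedScore pol Θ ℓ h + v h := by
  simp only [perturbedMax, perturbedScore_add]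

@[fun_prop]
lemma measurable_perturbedScore (Θ : B → ℝ) (h : B) :
    Measurable fun ℓ => perturbedScore pol Θ ℓ h := by
  unfold perturbedScore
  fun_prop

lemma integrable_perturbedScore [Fintype A] (Θ : B → ℝ) (h : B) :
    Integrable (fun ℓ => perturbedScore pol Θ ℓ h) (gaussianPerturbation X A) :=
  (integrable_const _).add <| integrable_finsetSum _ fun _ _ =>
    integrable_eval ((memLp_id_gaussianReal 1).integrable le_rfl)

lemma PhiN_eq_integral_perturbedMax [Fintype A] [Fintype B] (Θ : B → ℝ) :
    PhiN pol Θ = ∫ ℓ, perturbedMax pol Θ ℓ ∂gaussianPerturbation X A := rfl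

lemma integrable_perturbedMax [Fintype A] [Fintype B] (Θ : B → ℝ) :
    Integrable (perturbedMax pol Θ) (gaussianPerturbation X A) :=
  integrable_iSup_of_fintype (integrable_perturbedScore pol Θ)

/-- The coordinate `(x₀, pol h x₀)` occurs once in the score of `h` and never in that of `h'`. -/
lemma gaussianPerturbation_abs_sub_perturbedScore_le [Fintype A] {h h' : B} {x₀ : X}
    (hx₀ : pol h x₀ ≠ pol h' x₀) (Θ : B → ℝ) (t : ℝ) :
    gaussianPerturbation X A
        {ℓ | |perturbedScore pol Θ ℓ h - perturbedScore pol Θ ℓ h'| ≤ t} ≤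
      ENNReal.ofReal ((√(2 * π))⁻¹ * (2 * t)) := by
  classical
  let L : (X × A → ℝ) →ₗ[ℝ] ℝ :=
    ∑ x, (LinearMap.proj (R := ℝ) (φ := fun _ => ℝ) (x, pol h x) -
      LinearMap.proj (x, pol h' x))
  have hset : {ℓ | |perturbedScore pol Θ ℓ h - perturbedScore pol Θ ℓ h'| ≤ t} =
      {ℓ | |L ℓ + (Θ h - Θ h')| ≤ t} := by
    ext ℓ
    simp only [perturbedScore, mem_ofPred_eq, Finset.sum_sub_distrib, L, LinearMap.sub_apply,
      LinearMap.coe_sum, LinearMap.coe_proj, Finset.sum_apply, Function.eval]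
    ring_nf
  have hh : ∀ x, (Pi.single (x₀, pol h x₀) 1 : X × A → ℝ) (x, pol h x) =
      if x = x₀ then 1 else 0 := by
    intro x
    by_cases hx : x = x₀ <;> simp [hx]
  have hh' : ∀ x, (Pi.single (x₀, pol h x₀) 1 : X × A → ℝ) (x, pol h' x) = 0 := by
    intro x
    rw [Pi.single_apply, if_neg]
    intro hx
    obtain ⟨rfl, hx⟩ := Prod.mk.inj hx
    exact hx₀ hx.symm
  have hL : L (Pi.single (x₀, pol h x₀) 1) = 1 := by
    simp [L, hh, hh']
  rw [hset]
  refine Measure.pi_abs_add_le_of_map_single (fun c => ?_) L hL _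
  simpa using gaussianReal_abs_add_le 0 one_ne_zero c t

def nearTieSet [Fintype B] (Θ : B → ℝ) (t : ℝ) : Set (X × A → ℝ) :=
  ⋃ p ∈ (Finset.univ.offDiag : Finset (B × B)),
    {ℓ | |perturbedScore pol Θ ℓ p.1 - perturbedScore pol Θ ℓ p.2| ≤ t}

lemma measurableSet_nearTieSet [Fintype B] (Θ : B → ℝ) (t : ℝ) :
    MeasurableSet (nearTieSet pol Θ t) :=
  Finset.measurableSet_biUnion _ fun _ _ => measurableSet_le (by fun_prop) measurable_const

lemma gaussianPerturbation_nearTieSet_le [Fintype A] [Fintype B]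
    (hsep : ∀ h h' : B, h ≠ h' → ∃ x : X, pol h x ≠ pol h' x) (Θ : B → ℝ) (t : ℝ) :
    gaussianPerturbation X A (nearTieSet pol Θ t) ≤
      ENNReal.ofReal (Fintype.card B ^ 2 * ((√(2 * π))⁻¹ * (2 * t))) := by
  classical
  calc gaussianPerturbation X A (nearTieSet pol Θ t)
      ≤ ∑ p ∈ (Finset.univ.offDiag : Finset (B × B)), gaussianPerturbation X A
          {ℓ | |perturbedScore pol Θ ℓ p.1 - perturbedScore pol Θ ℓ p.2| ≤ t} :=
        measure_biUnion_finset_le _ _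
    _ ≤ ∑ _p ∈ (Finset.univ.offDiag : Finset (B × B)),
          ENNReal.ofReal ((√(2 * π))⁻¹ * (2 * t)) :=
        Finset.sum_le_sum fun p hp => by
          obtain ⟨x₀, hx₀⟩ := hsep p.1 p.2 (Finset.mem_offDiag.1 hp).2.2
          exact gaussianPerturbation_abs_sub_perturbedScore_le pol hx₀ Θ t
    _ ≤ ENNReal.ofReal (Fintype.card B ^ 2 * ((√(2 * π))⁻¹ * (2 * t))) := by
        rw [Finset.sum_const, nsmul_eq_mul,
          ENNReal.ofReal_mul (p := (Fintype.card B : ℝ) ^ 2) (by positivity)]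
        gcongr
        rw [ENNReal.ofReal_pow (by positivity), ENNReal.ofReal_natCast, Finset.offDiag_card,
          Finset.card_univ]
        exact_mod_cast (Nat.sub_le _ _).trans_eq (sq _).symm

section Maximizer

variable [Fintype B] {Θ : B → ℝ} {ℓ : X × A → ℝ} {b : B}

lemma le_perturbedMax_add_sub (hb : ∀ h, perturbedScore pol Θ ℓ h ≤ perturbedScore pol Θ ℓ b)
    (v : B → ℝ) : v b ≤ perturbedMax pol (Θ + v) ℓ - perturbedMax pol Θ ℓ := by
  rw [perturbedMax_add]
  exact le_ciSup_add_sub_ciSup v hb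

lemma perturbedMax_add_sub_sub_le_indicator
    (hb : ∀ h, perturbedScore pol Θ ℓ h ≤ perturbedScore pol Θ ℓ b) (v : B → ℝ) :
    perturbedMax pol (Θ + v) ℓ - perturbedMax pol Θ ℓ - v b ≤
      (nearTieSet pol Θ (2 * ‖v‖)).indicator (fun _ => 2 * ‖v‖) ℓ := by
  rw [perturbedMax_add, perturbedMax]
  by_cases hℓ : ℓ ∈ nearTieSet pol Θ (2 * ‖v‖)
  · rw [indicator_of_mem hℓ]
    linarith [ciSup_add_sub_ciSup_le v hb]
  · rw [indicator_of_notMem hℓ, ciSup_add_sub_ciSup_of_forall_gap v hb, sub_self]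
    intro h hh
    by_contra! hgap
    refine hℓ (mem_biUnion (x := (b, h)) (by simpa using Ne.symm hh) ?_)
    rwa [mem_ofPred_eq, abs_of_nonneg (sub_nonneg.2 (hb h))]

end Maximizer

lemma abs_PhiN_add_sub_sub_integral_le [Fintype A] [Fintype B] [DecidableEq B]
    (hsep : ∀ h h' : B, h ≠ h' → ∃ x : X, pol h x ≠ pol h' x) {Θ : B → ℝ}
    {sel : (X × A → ℝ) → B}
    (hmeas : ∀ h, Measurable fun ℓ => if sel ℓ = h then (1 : ℝ) else 0)
    (hsel : ∀ᵐ ℓ ∂gaussianPerturbation X A, ∀ h,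
      perturbedScore pol Θ ℓ h ≤ perturbedScore pol Θ ℓ (sel ℓ)) (v : B → ℝ) :
    |PhiN pol (Θ + v) - PhiN pol Θ - ∫ ℓ, v (sel ℓ) ∂gaussianPerturbation X A| ≤
      8 * (√(2 * π))⁻¹ * Fintype.card B ^ 2 * ‖v‖ ^ 2 := by
  set γ := gaussianPerturbation X A
  set R := fun ℓ => perturbedMax pol (Θ + v) ℓ - perturbedMax pol Θ ℓ - v (sel ℓ)
  set T := nearTieSet pol Θ (2 * ‖v‖)
  have hM_int := integrable_perturbedMax pol (Θ + v)
  have hM_int' := integrable_perturbedMax pol Θ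
  have hΔ_int : Integrable (fun ℓ => perturbedMax pol (Θ + v) ℓ - perturbedMax pol Θ ℓ) γ :=
    hM_int.sub hM_int'
  have hsel_int := integrable_comp_of_measurable_ite (μ := γ) hmeas v
  have hR_eq : PhiN pol (Θ + v) - PhiN pol Θ - ∫ ℓ, v (sel ℓ) ∂γ = ∫ ℓ, R ℓ ∂γ := by
    rw [PhiN_eq_integral_perturbedMax, PhiN_eq_integral_perturbedMax,
      ← integral_sub hM_int hM_int', ← integral_sub hΔ_int hsel_int]
  have hR_nonneg : 0 ≤ᵐ[γ] R := hsel.mono fun ℓ hℓ => by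
    simp only [Pi.zero_apply, R]
    linarith [le_perturbedMax_add_sub pol hℓ v]
  have hR_le : R ≤ᵐ[γ] T.indicator fun _ => 2 * ‖v‖ :=
    hsel.mono fun ℓ hℓ => perturbedMax_add_sub_sub_le_indicator pol hℓ v
  have hT : γ.real T ≤ Fintype.card B ^ 2 * ((√(2 * π))⁻¹ * (2 * (2 * ‖v‖))) :=
    ENNReal.toReal_le_of_le_ofReal (by positivity)
      (gaussianPerturbation_nearTieSet_le pol hsep Θ _)
  rw [hR_eq, abs_of_nonneg (integral_nonneg_of_ae hR_nonneg)]
  calc ∫ ℓ, R ℓ ∂γ ≤ ∫ ℓ, T.indicator (fun _ => 2 * ‖v‖) ℓ ∂γ :=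
        integral_mono_ae (hΔ_int.sub hsel_int)
          ((integrable_const _).indicator (measurableSet_nearTieSet pol Θ _)) hR_le
    _ = γ.real T * (2 * ‖v‖) := integral_indicator_const _ (measurableSet_nearTieSet pol Θ _)
    _ ≤ Fintype.card B ^ 2 * ((√(2 * π))⁻¹ * (2 * (2 * ‖v‖))) * (2 * ‖v‖) := by gcongr
    _ = 8 * (√(2 * π))⁻¹ * Fintype.card B ^ 2 * ‖v‖ ^ 2 := by ring

end PerturbedMax

theorem PhiN_hasFDerivAt_expected_onehot_general {X A B : Type*}
    [Fintype X] [Fintype A] [Fintype B]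
    [DecidableEq B]
    (pol : B → X → A)
    (hsep : ∀ h h' : B, h ≠ h' → ∃ x : X, pol h x ≠ pol h' x)
    (Θ : B → ℝ)
    (sel : ((X × A) → ℝ) → B)
    (hmeas : ∀ h : B,
      Measurable fun ℓ : (X × A) → ℝ => (if sel ℓ = h then (1:ℝ) else 0))
    (hsel : ∀ᵐ ℓ : (X × A) → ℝ ∂(gaussianPerturbation X A), ∀ h' : B,
      Θ h' + ∑ x : X, ℓ (x, pol h' x)
        ≤ Θ (sel ℓ) + ∑ x : X, ℓ (x, pol (sel ℓ) x)) :
    HasFDerivAt (PhiN pol)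
      (∑ h : B,
        (∫ ℓ : (X × A) → ℝ, (if sel ℓ = h then (1:ℝ) else 0)
            ∂(gaussianPerturbation X A)) •
          (ContinuousLinearMap.proj h : ((B → ℝ) →L[ℝ] ℝ))) Θ :=
  hasFDerivAt_of_norm_sub_le_sq _ fun v => by
    rw [sum_integral_ite_smul_proj_apply hmeas, Real.norm_eq_abs]
    exact abs_PhiN_add_sub_sub_integral_le pol hsep hmeas hsel v

/-- `Φ_𝒩` is differentiable at every `Θ`, with gradient
`∇Φ_𝒩(Θ) = E_{ℓ∼γ}[H(Θ,ℓ)]`, the expectation of the one-hot vector at the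
(γ-a.s. unique) maximizer of `h ↦ Θ[h] + q(ℓ)[h]`, for any measurable
selection `sel` of maximizers. -/
theorem PhiN_hasFDerivAt_expected_onehot {X A B : Type*}
    [Fintype X] [Fintype A] [Fintype B]
    [Nonempty X] [Nonempty A] [Nonempty B] [DecidableEq B]
    (pol : B → X → A)
    (hsep : ∀ h h' : B, h ≠ h' → ∃ x : X, pol h x ≠ pol h' x)
    (Θ : B → ℝ)
    (sel : ((X × A) → ℝ) → B)
    (hmeas : ∀ h : B,
      Measurable fun ℓ : (X × A) → ℝ => (if sel ℓ = h then (1:ℝ) else 0))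
    (hsel : ∀ᵐ ℓ : (X × A) → ℝ ∂(gaussianPerturbation X A), ∀ h' : B,
      Θ h' + ∑ x : X, ℓ (x, pol h' x)
        ≤ Θ (sel ℓ) + ∑ x : X, ℓ (x, pol (sel ℓ) x)) :
    HasFDerivAt (PhiN pol)
      (∑ h : B,
        (∫ ℓ : (X × A) → ℝ, (if sel ℓ = h then (1:ℝ) else 0)
            ∂(gaussianPerturbation X A)) •
          (ContinuousLinearMap.proj h : ((B → ℝ) →L[ℝ] ℝ))) Θ :=
  PhiN_hasFDerivAt_expected_onehot_general pol hsep Θ sel hmeas hsel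
end

section
/- sup_{u∈Δ(ℬ)} R_𝒩(u) − inf_{u∈Δ(ℬ)} R_𝒩(u) ≤ √(2 X ln B). -/
open MeasureTheory ProbabilityTheory

/-- `R_𝒩(u) = sup_Θ (⟨Θ,u⟩ − Φ_𝒩(Θ))`, the Fenchel conjugate of `Φ_𝒩`
(real-valued; it is finite on `Δ(ℬ)`). -/
noncomputable def RN {X A B : Type*} [Fintype X] [Fintype A] [Fintype B]
    (pol : B → X → A) (u : B → ℝ) : ℝ :=
  ⨆ Θ : B → ℝ, ((∑ h : B, Θ h * u h) - PhiN pol Θ)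

/-!
On `Δ(ℬ)` we have `⟨Θ, u⟩ ≤ max Θ ≤ Φ_𝒩(Θ)`, the last step because each `q(ℓ)[h]` is centred;
hence `R_𝒩 ≤ 0` there, while the choice `Θ = 0` gives `R_𝒩 ≥ -Φ_𝒩(0)`. Each `q(ℓ)[h]` is a sum of
`X` independent standard Gaussians, hence sub-Gaussian with variance proxy `X`, and the maximal
inequality for `B` sub-Gaussian variables (Jensen for `exp (t ·)`, a union bound, and optimising
over `t`) gives `Φ_𝒩(0) = E[max_h q(ℓ)[h]] ≤ √(2 X ln B)`.
-/

open Real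
open scoped NNReal

lemma le_sqrt_two_mul_mul_of_forall_mul_le {M a b : ℝ} (hb : 0 ≤ b)
    (h : ∀ t > 0, t * M ≤ a + b * t ^ 2 / 2) : M ≤ √(2 * b * a) := by
  rcases le_or_gt M 0 with hM | hM
  · exact hM.trans (sqrt_nonneg _)
  rcases hb.eq_or_lt with rfl | hb
  · have := h ((|a| + 1) / M) (by positivity)
    rw [div_mul_cancel₀ _ hM.ne'] at this
    linarith [le_abs_self a]
  · -- `t = M / b` maximises `t * M - b * t ^ 2 / 2`
    have := h (M / b) (by positivity)
    rw [le_sqrt' hM]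
    field_simp at this
    nlinarith

lemma apply_iSup_le_sum_apply_of_nonneg {ι : Type*} [Fintype ι] [Nonempty ι] {f : ℝ → ℝ}
    (hf : ∀ s, 0 ≤ f s) (y : ι → ℝ) : f (⨆ i, y i) ≤ ∑ i, f (y i) := by
  obtain ⟨i, hi⟩ := exists_eq_ciSup_of_finite (f := y)
  rw [← hi]
  exact Finset.single_le_sum (f := fun j => f (y j)) (fun j _ => hf _) (Finset.mem_univ i)

section

variable {Ω ι : Type*} {mΩ : MeasurableSpace Ω} {μ : Measure Ω} [Fintype ι] [Nonempty ι]
  {Y : ι → Ω → ℝ}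

lemma integrable_iSup_of_integrable (hY : ∀ i, Integrable (Y i) μ) :
    Integrable (fun ω => ⨆ i, Y i ω) μ :=
  (integrable_finsetSum _ fun i _ => (hY i).abs).mono'
    (AEMeasurable.iSup fun i => (hY i).aemeasurable).aestronglyMeasurable
    (ae_of_all _ fun ω => apply_iSup_le_sum_apply_of_nonneg abs_nonneg (Y · ω))

lemma mul_integral_iSup_le_of_hasSubgaussianMGF [IsProbabilityMeasure μ] {c : ℝ≥0}
    (hY : ∀ i, HasSubgaussianMGF (Y i) c μ) (t : ℝ) :
    t * ∫ ω, ⨆ i, Y i ω ∂μ ≤ log (Fintype.card ι) + c * t ^ 2 / 2 := by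
  have hsum : Integrable (fun ω => ∑ i, exp (t * Y i ω)) μ :=
    integrable_finsetSum _ fun i _ => (hY i).integrable_exp_mul t
  have hmax : Integrable (fun ω => ⨆ i, Y i ω) μ :=
    integrable_iSup_of_integrable fun i => (hY i).integrable
  have hpointwise (ω : Ω) : exp (t * ⨆ i, Y i ω) ≤ ∑ i, exp (t * Y i ω) :=
    apply_iSup_le_sum_apply_of_nonneg (f := fun s => exp (t * s)) (fun _ => (exp_pos _).le) _
  have hexp : Integrable (fun ω => exp (t * ⨆ i, Y i ω)) μ :=
    hsum.mono' (continuous_exp.comp_aestronglyMeasurable (hmax.const_mul t).1)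
      (ae_of_all _ fun ω => by simpa only [norm_eq_abs, abs_exp] using hpointwise ω)
  have jensen : exp (t * ∫ ω, ⨆ i, Y i ω ∂μ) ≤ ∫ ω, exp (t * ⨆ i, Y i ω) ∂μ := by
    rw [← integral_const_mul]
    exact convexOn_exp.map_integral_le continuous_exp.continuousOn isClosed_univ
      (ae_of_all _ fun _ => Set.mem_univ _) (hmax.const_mul t) hexp
  have union : ∫ ω, exp (t * ⨆ i, Y i ω) ∂μ ≤ Fintype.card ι * exp (c * t ^ 2 / 2) := by
    calc ∫ ω, exp (t * ⨆ i, Y i ω) ∂μ ≤ ∫ ω, ∑ i, exp (t * Y i ω) ∂μ :=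
          integral_mono hexp hsum hpointwise
      _ = ∑ i, mgf (Y i) μ t := integral_finsetSum _ fun i _ => (hY i).integrable_exp_mul t
      _ ≤ ∑ _i : ι, exp (c * t ^ 2 / 2) := Finset.sum_le_sum fun i _ => (hY i).mgf_le t
      _ = Fintype.card ι * exp (c * t ^ 2 / 2) := by simp
  calc t * ∫ ω, ⨆ i, Y i ω ∂μ ≤ log (Fintype.card ι * exp (c * t ^ 2 / 2)) :=
        (le_log_iff_exp_le (by positivity)).2 (jensen.trans union)
    _ = log (Fintype.card ι) + c * t ^ 2 / 2 := by
        rw [log_mul (by positivity) (exp_pos _).ne', log_exp]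

theorem integral_iSup_le_of_hasSubgaussianMGF [IsProbabilityMeasure μ] {c : ℝ≥0}
    (hY : ∀ i, HasSubgaussianMGF (Y i) c μ) :
    ∫ ω, ⨆ i, Y i ω ∂μ ≤ √(2 * c * log (Fintype.card ι)) :=
  le_sqrt_two_mul_mul_of_forall_mul_le c.2 fun _ _ =>
    mul_integral_iSup_le_of_hasSubgaussianMGF hY _

end

section

variable {ι κ : Type*} [Fintype ι] [Fintype κ] {v : ℝ≥0}

lemma hasSubgaussianMGF_eval_pi_gaussianReal (i : ι) :
    HasSubgaussianMGF (fun ω : ι → ℝ => ω i) v (Measure.pi fun _ => gaussianReal 0 v) := by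
  refine ⟨fun t => integrable_comp_eval (X := fun _ => ℝ) (f := fun x => exp (t * x))
    (integrable_exp_mul_gaussianReal t), fun t => ?_⟩
  rw [mgf_gaussianReal (measurePreserving_eval _ i).map_eq, zero_mul, zero_add]

lemma hasSubgaussianMGF_sum_eval_pi_gaussianReal {g : κ → ι} (hg : g.Injective) :
    HasSubgaussianMGF (fun ω : ι → ℝ => ∑ k, ω (g k)) (Fintype.card κ * v)
      (Measure.pi fun _ => gaussianReal 0 v) := by
  have hindep := (iIndepFun_pi (μ := fun _ : ι => gaussianReal 0 v) (X := fun _ => id)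
    fun _ => aemeasurable_id).precomp hg
  simpa using HasSubgaussianMGF.sum_of_iIndepFun hindep (s := Finset.univ)
    fun k _ => hasSubgaussianMGF_eval_pi_gaussianReal (g k)

lemma integral_sum_eval_pi_gaussianReal (g : κ → ι) :
    ∫ ω : ι → ℝ, ∑ k, ω (g k) ∂(Measure.pi fun _ => gaussianReal 0 v) = 0 := by
  rw [integral_finsetSum _ fun k _ => (hasSubgaussianMGF_eval_pi_gaussianReal (g k)).integrable]
  refine Finset.sum_eq_zero fun k _ => ?_
  rw [integral_comp_eval (X := fun _ => ℝ) (f := fun x => x) aestronglyMeasurable_id,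
    integral_id_gaussianReal]

end

section Perturbation

variable {X A B : Type*} [Fintype X] [Fintype A] (pol : B → X → A)

instance : IsProbabilityMeasure (gaussianPerturbation X A) :=
  inferInstanceAs (IsProbabilityMeasure (Measure.pi _))

lemma hasSubgaussianMGF_sum_perturbation (h : B) :
    HasSubgaussianMGF (fun ℓ : X × A → ℝ => ∑ x, ℓ (x, pol h x)) (Fintype.card X)
      (gaussianPerturbation X A) := by
  simpa [gaussianPerturbation] using hasSubgaussianMGF_sum_eval_pi_gaussianReal (v := 1)
    (g := fun x => (x, pol h x)) fun _ _ hx => congrArg Prod.fst hx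

lemma integral_sum_perturbation (h : B) :
    ∫ ℓ : X × A → ℝ, ∑ x, ℓ (x, pol h x) ∂(gaussianPerturbation X A) = 0 :=
  integral_sum_eval_pi_gaussianReal _

variable [Fintype B] [Nonempty B]

lemma le_PhiN (Θ : B → ℝ) (h : B) : Θ h ≤ PhiN pol Θ := by
  have hq := hasSubgaussianMGF_sum_perturbation pol
  calc Θ h = ∫ ℓ, (Θ h + ∑ x, ℓ (x, pol h x)) ∂(gaussianPerturbation X A) := by
        rw [integral_add (integrable_const _) (hq h).integrable, integral_sum_perturbation]
        simp
    _ ≤ PhiN pol Θ :=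
        integral_mono ((integrable_const _).add (hq h).integrable)
          (integrable_iSup_of_integrable fun h => (integrable_const _).add (hq h).integrable)
          fun ℓ => le_ciSup (f := fun h => Θ h + ∑ x, ℓ (x, pol h x))
            (Set.finite_range _).bddAbove h

lemma sum_mul_le_PhiN {u : B → ℝ} (hu : u ∈ stdSimplex ℝ B) (Θ : B → ℝ) :
    ∑ h, Θ h * u h ≤ PhiN pol Θ := by
  obtain ⟨h, hh⟩ := exists_eq_ciSup_of_finite (f := Θ)
  calc ∑ h, Θ h * u h ≤ ∑ h', Θ h * u h' := Finset.sum_le_sum fun h' _ =>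
        mul_le_mul_of_nonneg_right (hh ▸ le_ciSup (Set.finite_range _).bddAbove h') (hu.1 h')
    _ = Θ h := by rw [← Finset.mul_sum, hu.2, mul_one]
    _ ≤ PhiN pol Θ := le_PhiN pol Θ h

lemma RN_nonpos {u : B → ℝ} (hu : u ∈ stdSimplex ℝ B) : RN pol u ≤ 0 :=
  ciSup_le fun Θ => sub_nonpos.2 (sum_mul_le_PhiN pol hu Θ)

lemma neg_PhiN_zero_le_RN {u : B → ℝ} (hu : u ∈ stdSimplex ℝ B) :
    -PhiN pol 0 ≤ RN pol u := by
  have hbdd : BddAbove (Set.range fun Θ : B → ℝ => ∑ h, Θ h * u h - PhiN pol Θ) :=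
    ⟨0, Set.forall_mem_range.2 fun Θ => sub_nonpos.2 (sum_mul_le_PhiN pol hu Θ)⟩
  simpa [RN] using le_ciSup hbdd 0

lemma PhiN_zero_le :
    PhiN pol 0 ≤ √(2 * Fintype.card X * log (Fintype.card B)) := by
  simpa [PhiN] using
    integral_iSup_le_of_hasSubgaussianMGF (hasSubgaussianMGF_sum_perturbation pol)

end Perturbation

theorem RN_oscillation_le_general {X A B : Type*}
    [Fintype X] [Fintype A] [Fintype B]
    [Nonempty B]
    (pol : B → X → A) :
    sSup (RN pol '' stdSimplex ℝ B) - sInf (RN pol '' stdSimplex ℝ B)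
      ≤ Real.sqrt (2 * (Fintype.card X) * Real.log (Fintype.card B)) := by
  classical
  have hne : (RN pol '' stdSimplex ℝ B).Nonempty :=
    ⟨_, Set.mem_image_of_mem _ (single_mem_stdSimplex ℝ (Classical.arbitrary B))⟩
  have hsup : sSup (RN pol '' stdSimplex ℝ B) ≤ 0 :=
    csSup_le hne (Set.forall_mem_image.2 fun _ hu => RN_nonpos pol hu)
  have hinf : -PhiN pol 0 ≤ sInf (RN pol '' stdSimplex ℝ B) :=
    le_csInf hne (Set.forall_mem_image.2 fun _ hu => neg_PhiN_zero_le_RN pol hu)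
  linarith [PhiN_zero_le pol]

/-- `sup_{u∈Δ(ℬ)} R_𝒩(u) − inf_{u∈Δ(ℬ)} R_𝒩(u) ≤ √(2 X ln B)`. -/
theorem RN_oscillation_le {X A B : Type*}
    [Fintype X] [Fintype A] [Fintype B]
    [Nonempty X] [Nonempty A] [Nonempty B]
    (pol : B → X → A) :
    sSup (RN pol '' stdSimplex ℝ B) - sInf (RN pol '' stdSimplex ℝ B)
      ≤ Real.sqrt (2 * (Fintype.card X) * Real.log (Fintype.card B)) :=
  RN_oscillation_le_general pol
end

section
/- For every Θ ∈ ℝ^ℬ, the vector E_{ℓ∼γ}[H(−Θ, ℓ)] is the unique minimizer over u ∈ Δ(ℬ) of the function u ↦ ⟨Θ, u⟩ + R_𝒩(u); that is, argmin_{u∈Δ(ℬ)} (⟨Θ, u⟩ + R_𝒩(u)) = ∇Φ_𝒩(−Θ) = E_{ℓ∼γ}[H(−Θ, ℓ)]. -/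
open MeasureTheory ProbabilityTheory

/-!
`Φ_𝒩` is the expectation of a finite maximum, so the expected indicator of an almost surely
maximizing index at `−Θ` is a subgradient of `Φ_𝒩` there. By the equality case of Fenchel–Young it
minimizes `⟨Θ, u⟩ + R_𝒩(u)`, with value `−Φ_𝒩(−Θ)`, and every other minimizer is again a
subgradient at `−Θ`. The Gaussian perturbation makes the maximizer almost surely unique (a tie
between two policies pins one coordinate of `ℓ` to a function of the others, a null set for the
product measure), so by dominated convergence `Φ_𝒩` has one-sided directional derivatives
`⟨w, E[H(−Θ, ℓ)]⟩` at `−Θ`; a subgradient of such a function is that gradient.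
-/

open Filter Set Topology
open scoped ENNReal

section FiniteMax

variable {ι : Type*} [Finite ι]

lemma eventually_forall_add_mul_le {a : ι → ℝ} {i : ι} (h : ∀ j ≠ i, a j < a i) (w : ι → ℝ) :
    ∀ᶠ t in 𝓝 (0 : ℝ), ∀ j, a j + t * w j ≤ a i + t * w i := by
  refine eventually_all.2 fun j => ?_
  rcases eq_or_ne j i with rfl | hj
  · exact Eventually.of_forall fun _ => le_rfl
  have hcont : Continuous fun t : ℝ => a j + t * w j - (a i + t * w i) := by fun_prop
  have hneg : a j + 0 * w j - (a i + 0 * w i) < 0 := by linarith [h j hj]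
  filter_upwards [hcont.continuousAt.eventually_lt continuousAt_const hneg] with t ht
  linarith

variable [Nonempty ι]

lemma ciSup_eq_of_forall_le {a : ι → ℝ} {i : ι} (h : ∀ j, a j ≤ a i) : ⨆ j, a j = a i :=
  le_antisymm (ciSup_le h) (le_ciSup (finite_range a).bddAbove i)

lemma abs_ciSup_sub_ciSup_le {f g : ι → ℝ} {c : ℝ} (h : ∀ i, |f i - g i| ≤ c) :
    |(⨆ i, f i) - ⨆ i, g i| ≤ c := by
  have key : ∀ f g : ι → ℝ, (∀ i, f i - g i ≤ c) → (⨆ i, f i) - ⨆ i, g i ≤ c := by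
    intro f g hfg
    rw [sub_le_iff_le_add]
    refine ciSup_le fun i => ?_
    linarith [hfg i, le_ciSup (finite_range g).bddAbove i]
  rw [abs_sub_le_iff]
  exact ⟨key f g fun i => (abs_sub_le_iff.1 (h i)).1, key g f fun i => (abs_sub_le_iff.1 (h i)).2⟩

end FiniteMax

lemma dotProduct_le_ciSup {ι : Type*} [Fintype ι] {u : ι → ℝ} (hu : u ∈ stdSimplex ℝ ι)
    (a : ι → ℝ) : a ⬝ᵥ u ≤ ⨆ i, a i :=
  calc a ⬝ᵥ u ≤ ∑ i, (⨆ j, a j) * u i :=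
        Finset.sum_le_sum fun i _ =>
          mul_le_mul_of_nonneg_right (le_ciSup (finite_range a).bddAbove i) (hu.1 i)
    _ = ⨆ i, a i := by rw [← Finset.mul_sum, hu.2, mul_one]

section FenchelConjugate

variable {ι : Type*} [Fintype ι] {f : (ι → ℝ) → ℝ}

noncomputable def fenchelConjugate (f : (ι → ℝ) → ℝ) (u : ι → ℝ) : ℝ :=
  ⨆ θ, θ ⬝ᵥ u - f θ

lemma fenchelConjugate_eq_of_subgradient {θ₀ g : ι → ℝ}
    (hsub : ∀ θ, f θ₀ + (θ - θ₀) ⬝ᵥ g ≤ f θ) :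
    fenchelConjugate f g = θ₀ ⬝ᵥ g - f θ₀ := by
  have hle : ∀ θ, θ ⬝ᵥ g - f θ ≤ θ₀ ⬝ᵥ g - f θ₀ := fun θ => by
    linarith [hsub θ, sub_dotProduct θ θ₀ g]
  exact le_antisymm (ciSup_le hle) (le_ciSup ⟨_, forall_mem_range.2 hle⟩ θ₀)

lemma dotProduct_sub_le_fenchelConjugate {u : ι → ℝ}
    (hbdd : BddAbove (range fun θ => θ ⬝ᵥ u - f θ)) (θ : ι → ℝ) :
    θ ⬝ᵥ u - f θ ≤ fenchelConjugate f u :=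
  le_ciSup hbdd θ

lemma subgradient_of_fenchelConjugate_le {θ₀ u : ι → ℝ}
    (hbdd : BddAbove (range fun θ => θ ⬝ᵥ u - f θ))
    (h : fenchelConjugate f u ≤ θ₀ ⬝ᵥ u - f θ₀) (θ : ι → ℝ) :
    f θ₀ + (θ - θ₀) ⬝ᵥ u ≤ f θ := by
  linarith [dotProduct_sub_le_fenchelConjugate hbdd θ, sub_dotProduct θ θ₀ u]

lemma eq_of_subgradient_of_tendsto_slope {θ₀ u g : ι → ℝ}
    (hsub : ∀ θ, f θ₀ + (θ - θ₀) ⬝ᵥ u ≤ f θ)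
    (hslope : ∀ w, Tendsto (fun t => (f (θ₀ + t • w) - f θ₀) / t) (𝓝[>] 0) (𝓝 (w ⬝ᵥ g))) :
    u = g := by
  have hle : ∀ w, w ⬝ᵥ u ≤ w ⬝ᵥ g := fun w =>
    ge_of_tendsto (hslope w) <| eventually_mem_nhdsWithin.mono fun t (ht : 0 < t) => by
      have := hsub (θ₀ + t • w)
      rw [add_sub_cancel_left, smul_dotProduct, smul_eq_mul] at this
      rw [le_div_iff₀ ht]
      linarith
  have hnonpos : (u - g) ⬝ᵥ (u - g) ≤ 0 := by
    rw [dotProduct_sub]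
    linarith [hle (u - g)]
  have hnonneg : 0 ≤ (u - g) ⬝ᵥ (u - g) := Finset.sum_nonneg fun i _ => mul_self_nonneg _
  exact sub_eq_zero.1 (dotProduct_self_eq_zero.1 (le_antisymm hnonpos hnonneg))

variable {S : Set (ι → ℝ)} {Θ g : ι → ℝ}

lemma isMinOn_dotProduct_add_fenchelConjugate
    (hbdd : ∀ u ∈ S, BddAbove (range fun θ => θ ⬝ᵥ u - f θ))
    (hsub : ∀ θ, f (-Θ) + (θ - -Θ) ⬝ᵥ g ≤ f θ) :
    IsMinOn (fun u => Θ ⬝ᵥ u + fenchelConjugate f u) S g := by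
  refine isMinOn_iff.2 fun u hu => ?_
  rw [fenchelConjugate_eq_of_subgradient hsub]
  linarith [dotProduct_sub_le_fenchelConjugate (hbdd u hu) (-Θ), neg_dotProduct Θ u,
    neg_dotProduct Θ g]

lemma eq_of_dotProduct_add_fenchelConjugate_eq {u : ι → ℝ}
    (hbdd : BddAbove (range fun θ => θ ⬝ᵥ u - f θ))
    (hsub : ∀ θ, f (-Θ) + (θ - -Θ) ⬝ᵥ g ≤ f θ)
    (hslope : ∀ w, Tendsto (fun t => (f (-Θ + t • w) - f (-Θ)) / t) (𝓝[>] 0) (𝓝 (w ⬝ᵥ g)))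
    (heq : Θ ⬝ᵥ u + fenchelConjugate f u = Θ ⬝ᵥ g + fenchelConjugate f g) :
    u = g := by
  refine eq_of_subgradient_of_tendsto_slope (subgradient_of_fenchelConjugate_le hbdd ?_) hslope
  rw [fenchelConjugate_eq_of_subgradient hsub] at heq
  linarith [neg_dotProduct Θ u, neg_dotProduct Θ g]

end FenchelConjugate

section ExpectedMax

variable {Ω ι : Type*} [MeasurableSpace Ω] {μ : Measure Ω}

noncomputable def expectedMax (μ : Measure Ω) (Q : Ω → ι → ℝ) (θ : ι → ℝ) : ℝ :=
  ∫ ω, ⨆ i, θ i + Q ω i ∂μ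

noncomputable def expectedOneHot [DecidableEq ι] (μ : Measure Ω) (sel : Ω → ι) : ι → ℝ :=
  fun i => ∫ ω, if sel ω = i then 1 else 0 ∂μ

lemma integrable_ite_eq [DecidableEq ι] [IsFiniteMeasure μ] {sel : Ω → ι} {i : ι}
    (hmeas : Measurable fun ω => if sel ω = i then (1 : ℝ) else 0) :
    Integrable (fun ω => if sel ω = i then (1 : ℝ) else 0) μ :=
  Integrable.of_bound hmeas.aestronglyMeasurable 1 (ae_of_all _ fun ω => by split_ifs <;> simp)

variable [Fintype ι]

lemma integrable_iSup_add [IsFiniteMeasure μ] [Nonempty ι] {Q : Ω → ι → ℝ}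
    (hQ : ∀ i, Integrable (fun ω => Q ω i) μ) (θ : ι → ℝ) :
    Integrable (fun ω => ⨆ i, θ i + Q ω i) μ := by
  have hint : ∀ i, Integrable (fun ω => θ i + Q ω i) μ := fun i => (integrable_const _).add (hQ i)
  refine Integrable.mono' (integrable_finsetSum Finset.univ fun i _ => (hint i).abs)
    (AEMeasurable.iSup fun i => (hint i).aemeasurable).aestronglyMeasurable
    (ae_of_all _ fun ω => ?_)
  have hbound : ∀ i, |(θ i + Q ω i) - 0| ≤ ∑ j, |θ j + Q ω j| := fun i => by
    rw [sub_zero]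
    exact Finset.single_le_sum (f := fun j => |θ j + Q ω j|) (fun j _ => abs_nonneg _)
      (Finset.mem_univ i)
  simpa using abs_ciSup_sub_ciSup_le (g := fun _ => 0) hbound

lemma dotProduct_add_integral_le_expectedMax [IsProbabilityMeasure μ] [Nonempty ι]
    {Q : Ω → ι → ℝ} (hQ : ∀ i, Integrable (fun ω => Q ω i) μ) {u : ι → ℝ}
    (hu : u ∈ stdSimplex ℝ ι) (θ : ι → ℝ) :
    θ ⬝ᵥ u + ∫ ω, Q ω ⬝ᵥ u ∂μ ≤ expectedMax μ Q θ := by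
  have hQu : Integrable (fun ω => Q ω ⬝ᵥ u) μ :=
    integrable_finsetSum Finset.univ fun i _ => (hQ i).mul_const _
  calc θ ⬝ᵥ u + ∫ ω, Q ω ⬝ᵥ u ∂μ = ∫ ω, θ ⬝ᵥ u + Q ω ⬝ᵥ u ∂μ := by
        rw [integral_add (integrable_const _) hQu, integral_const, probReal_univ, one_smul]
    _ ≤ expectedMax μ Q θ :=
        integral_mono ((integrable_const _).add hQu) (integrable_iSup_add hQ θ)
          fun ω => by simpa [add_dotProduct] using dotProduct_le_ciSup hu (θ + Q ω)

lemma bddAbove_dotProduct_sub_expectedMax [IsProbabilityMeasure μ] [Nonempty ι]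
    {Q : Ω → ι → ℝ} (hQ : ∀ i, Integrable (fun ω => Q ω i) μ) {u : ι → ℝ}
    (hu : u ∈ stdSimplex ℝ ι) :
    BddAbove (range fun θ => θ ⬝ᵥ u - expectedMax μ Q θ) :=
  ⟨-∫ ω, Q ω ⬝ᵥ u ∂μ, forall_mem_range.2 fun θ => by
    linarith [dotProduct_add_integral_le_expectedMax hQ hu θ]⟩

variable [DecidableEq ι] {sel : Ω → ι}
  (hmeas : ∀ i, Measurable fun ω => if sel ω = i then (1 : ℝ) else 0)
include hmeas

lemma integrable_comp_of_measurable_ite_s11 [IsFiniteMeasure μ] (w : ι → ℝ) :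
    Integrable (fun ω => w (sel ω)) μ := by
  simpa using
    integrable_finsetSum Finset.univ fun i _ => (integrable_ite_eq (hmeas i)).const_mul (w i)

lemma dotProduct_expectedOneHot [IsFiniteMeasure μ] (w : ι → ℝ) :
    w ⬝ᵥ expectedOneHot μ sel = ∫ ω, w (sel ω) ∂μ := by
  simp only [dotProduct, expectedOneHot, ← integral_const_mul]
  rw [← integral_finsetSum _ fun i _ => (integrable_ite_eq (hmeas i)).const_mul _]
  simp

lemma expectedOneHot_mem_stdSimplex [IsProbabilityMeasure μ] :
    expectedOneHot μ sel ∈ stdSimplex ℝ ι := by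
  refine ⟨fun i => integral_nonneg fun ω => by split_ifs <;> norm_num, ?_⟩
  simpa [dotProduct] using dotProduct_expectedOneHot (μ := μ) hmeas (fun _ => 1)

variable [IsFiniteMeasure μ] [Nonempty ι] {Q : Ω → ι → ℝ}
  (hQ : ∀ i, Integrable (fun ω => Q ω i) μ) {θ : ι → ℝ}
include hQ

lemma expectedMax_add_dotProduct_expectedOneHot_le
    (hsel : ∀ᵐ ω ∂μ, ∀ i, θ i + Q ω i ≤ θ (sel ω) + Q ω (sel ω)) (θ' : ι → ℝ) :
    expectedMax μ Q θ + (θ' - θ) ⬝ᵥ expectedOneHot μ sel ≤ expectedMax μ Q θ' := by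
  rw [dotProduct_expectedOneHot hmeas, expectedMax, expectedMax,
    ← integral_add (integrable_iSup_add hQ θ) (integrable_comp_of_measurable_ite_s11 hmeas _)]
  refine integral_mono_ae ((integrable_iSup_add hQ θ).add
    (integrable_comp_of_measurable_ite_s11 hmeas _)) (integrable_iSup_add hQ θ') ?_
  filter_upwards [hsel] with ω hω
  rw [ciSup_eq_of_forall_le hω, Pi.sub_apply]
  linarith [le_ciSup (finite_range fun i => θ' i + Q ω i).bddAbove (sel ω)]

lemma tendsto_slope_expectedMax
    (hsel : ∀ᵐ ω ∂μ, ∀ i ≠ sel ω, θ i + Q ω i < θ (sel ω) + Q ω (sel ω)) (w : ι → ℝ) :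
    Tendsto (fun t => (expectedMax μ Q (θ + t • w) - expectedMax μ Q θ) / t) (𝓝[>] 0)
      (𝓝 (w ⬝ᵥ expectedOneHot μ sel)) := by
  have hslope : ∀ t, (expectedMax μ Q (θ + t • w) - expectedMax μ Q θ) / t =
      ∫ ω, ((⨆ i, (θ + t • w) i + Q ω i) - ⨆ i, θ i + Q ω i) / t ∂μ := fun t => by
    rw [expectedMax, expectedMax, ← integral_sub (integrable_iSup_add hQ _)
      (integrable_iSup_add hQ θ), integral_div]
  simp only [hslope, dotProduct_expectedOneHot hmeas]
  refine tendsto_integral_filter_of_dominated_convergence (fun _ => ∑ i, |w i|)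
    (Eventually.of_forall fun t => (((integrable_iSup_add hQ _).sub
      (integrable_iSup_add hQ θ)).div_const t).aestronglyMeasurable) ?_ (integrable_const _) ?_
  all_goals simp only [Pi.add_apply, Pi.smul_apply, smul_eq_mul, add_right_comm]
  · filter_upwards [self_mem_nhdsWithin] with t (ht : 0 < t)
    refine ae_of_all _ fun ω => ?_
    rw [Real.norm_eq_abs, abs_div, abs_of_pos ht, div_le_iff₀ ht]
    refine abs_ciSup_sub_ciSup_le fun i => ?_
    rw [add_sub_cancel_left, abs_mul, abs_of_pos ht, mul_comm]
    exact mul_le_mul_of_nonneg_right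
      (Finset.single_le_sum (f := fun j => |w j|) (fun j _ => abs_nonneg _) (Finset.mem_univ i))
      ht.le
  · filter_upwards [hsel] with ω hω
    have hev := eventually_forall_add_mul_le hω w
    have h0 : ⨆ i, θ i + Q ω i = θ (sel ω) + Q ω (sel ω) :=
      ciSup_eq_of_forall_le fun i => by simpa using hev.self_of_nhds i
    refine tendsto_const_nhds.congr' ?_
    filter_upwards [nhdsWithin_le_nhds hev, self_mem_nhdsWithin] with t ht (htpos : 0 < t)
    rw [ciSup_eq_of_forall_le ht, h0]
    field_simp
    ring

end ExpectedMax

lemma MeasureTheory.Measure.pi_setOf_eval_eq_null {ι : Type*} [Fintype ι] [DecidableEq ι]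
    (μ : ι → Measure ℝ) [∀ i, SigmaFinite (μ i)] (i : ι) [NullSingletonClass (μ i)]
    {g : (ι → ℝ) → ℝ} (hg : Measurable g) (hgi : ∀ x r, g (Function.update x i r) = g x) :
    Measure.pi μ {x | x i = g x} = 0 := by
  set S := {x : ι → ℝ | x i = g x}
  have hS : MeasurableSet S := measurableSet_eq_fun (measurable_pi_apply i) hg
  have hslice : ∀ x, ∫⁻ r, S.indicator (1 : (ι → ℝ) → ℝ≥0∞) (Function.update x i r) ∂μ i = 0 :=
      fun x => by
    have : ∀ r, S.indicator (1 : (ι → ℝ) → ℝ≥0∞) (Function.update x i r) =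
        ({g x} : Set ℝ).indicator 1 r := fun r => by
      simp [S, Set.indicator, hgi]
    simp_rw [this]
    rw [lintegral_indicator_one (measurableSet_singleton _), measure_singleton]
  rw [← lintegral_indicator_one hS, lintegral_eq_lmarginal_univ 0,
    ← Finset.insert_erase (Finset.mem_univ i),
    lmarginal_insert' _ (measurable_one.indicator hS) (Finset.notMem_erase i _)]
  simp [hslice, lmarginal]

section GaussianPerturbation

variable {X A B : Type*} [Fintype X] [Fintype A]

instance inst_s11 : IsProbabilityMeasure (gaussianPerturbation X A) := by
  unfold gaussianPerturbation; infer_instance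

def totalLoss (pol : B → X → A) (ℓ : X × A → ℝ) (h : B) : ℝ := ∑ x, ℓ (x, pol h x)

lemma integrable_totalLoss (pol : B → X → A) (h : B) :
    Integrable (fun ℓ => totalLoss pol ℓ h) (gaussianPerturbation X A) :=
  integrable_finsetSum _ fun _ _ => integrable_eval IsGaussian.integrable_id

lemma gaussianPerturbation_tie_null (pol : B → X → A) (θ : B → ℝ) {h h' : B} {x₀ : X}
    (hx₀ : pol h x₀ ≠ pol h' x₀) :
    gaussianPerturbation X A {ℓ | θ h + totalLoss pol ℓ h = θ h' + totalLoss pol ℓ h'} = 0 := by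
  classical
  have : NullSingletonClass (gaussianReal 0 1) := nullSingletonClass_gaussianReal one_ne_zero
  -- the tie pins down the coordinate `(x₀, pol h x₀)`, on which `g` does not depend
  set g : (X × A → ℝ) → ℝ := fun ℓ =>
    θ h' + totalLoss pol ℓ h' - θ h - ∑ x ∈ Finset.univ.erase x₀, ℓ (x, pol h x)
  have hgi : ∀ ℓ r, g (Function.update ℓ (x₀, pol h x₀) r) = g ℓ := fun ℓ r => by
    have hoff : ∀ x, (x, pol h' x) ≠ (x₀, pol h x₀) := fun x hx => by
      obtain ⟨rfl, hx⟩ := Prod.ext_iff.1 hx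
      exact hx₀ hx.symm
    have hoff_erase : ∀ x ∈ Finset.univ.erase x₀, (x, pol h x) ≠ (x₀, pol h x₀) :=
      fun x hx hxj => Finset.ne_of_mem_erase hx (congrArg Prod.fst hxj)
    simp only [g, totalLoss, Function.update_of_ne (hoff _),
      Finset.sum_congr rfl fun x hx => Function.update_of_ne (hoff_erase x hx) r ℓ]
  refine measure_mono_null (fun ℓ (hℓ : _ = _) => ?_)
    (Measure.pi_setOf_eval_eq_null _ _ (by simp only [g, totalLoss]; fun_prop) hgi)
  show ℓ (x₀, pol h x₀) = g ℓ
  rw [totalLoss, ← Finset.add_sum_erase _ _ (Finset.mem_univ x₀)] at hℓ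
  simp only [g]
  linarith

lemma ae_totalLoss_ne [Finite B] (pol : B → X → A)
    (hsep : ∀ h h' : B, h ≠ h' → ∃ x : X, pol h x ≠ pol h' x) (θ : B → ℝ) :
    ∀ᵐ ℓ ∂gaussianPerturbation X A, ∀ h h', h ≠ h' →
      θ h + totalLoss pol ℓ h ≠ θ h' + totalLoss pol ℓ h' := by
  refine ae_all_iff.2 fun h => ae_all_iff.2 fun h' => ?_
  rcases eq_or_ne h h' with rfl | hne
  · exact ae_of_all _ fun _ hne => absurd rfl hne
  obtain ⟨x₀, hx₀⟩ := hsep h h' hne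
  filter_upwards [measure_eq_zero_iff_ae_notMem.1 (gaussianPerturbation_tie_null pol θ hx₀)]
    with ℓ hℓ _ using hℓ

end GaussianPerturbation

theorem ftrl_equals_expected_ftpl_general {X A B : Type*}
    [Fintype X] [Fintype A] [Fintype B]
    [DecidableEq B]
    (pol : B → X → A)
    (hsep : ∀ h h' : B, h ≠ h' → ∃ x : X, pol h x ≠ pol h' x)
    (Θ : B → ℝ)
    (sel : ((X × A) → ℝ) → B)
    (hmeas : ∀ h : B,
      Measurable fun ℓ : (X × A) → ℝ => (if sel ℓ = h then (1:ℝ) else 0))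
    (hsel : ∀ᵐ ℓ : (X × A) → ℝ ∂(gaussianPerturbation X A), ∀ h' : B,
      -Θ h' + ∑ x : X, ℓ (x, pol h' x)
        ≤ -Θ (sel ℓ) + ∑ x : X, ℓ (x, pol (sel ℓ) x)) :
    (fun h : B => ∫ ℓ : (X × A) → ℝ, (if sel ℓ = h then (1:ℝ) else 0)
        ∂(gaussianPerturbation X A)) ∈ stdSimplex ℝ B ∧
    (∀ u ∈ stdSimplex ℝ B,
      (∑ h : B, Θ h * (∫ ℓ : (X × A) → ℝ, (if sel ℓ = h then (1:ℝ) else 0)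
            ∂(gaussianPerturbation X A)))
        + RN pol (fun h : B => ∫ ℓ : (X × A) → ℝ,
            (if sel ℓ = h then (1:ℝ) else 0) ∂(gaussianPerturbation X A))
      ≤ (∑ h : B, Θ h * u h) + RN pol u) ∧
    (∀ u ∈ stdSimplex ℝ B,
      (∑ h : B, Θ h * u h) + RN pol u
        = (∑ h : B, Θ h * (∫ ℓ : (X × A) → ℝ,
              (if sel ℓ = h then (1:ℝ) else 0) ∂(gaussianPerturbation X A)))
          + RN pol (fun h : B => ∫ ℓ : (X × A) → ℝ,
              (if sel ℓ = h then (1:ℝ) else 0) ∂(gaussianPerturbation X A)) →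
      u = fun h : B => ∫ ℓ : (X × A) → ℝ,
            (if sel ℓ = h then (1:ℝ) else 0) ∂(gaussianPerturbation X A)) := by
  have : Nonempty B := ⟨sel 0⟩
  -- `PhiN pol` is `expectedMax (gaussianPerturbation X A) (totalLoss pol)`, `RN pol` is its
  -- `fenchelConjugate`, and the vector in the statement is `expectedOneHot`, all definitionally.
  have hQ := integrable_totalLoss (X := X) (A := A) pol
  have hbdd := fun u (hu : u ∈ stdSimplex ℝ B) => bddAbove_dotProduct_sub_expectedMax hQ hu
  have hsub := expectedMax_add_dotProduct_expectedOneHot_le hmeas hQ hsel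
  have hslope := tendsto_slope_expectedMax hmeas hQ <| by
    filter_upwards [hsel, ae_totalLoss_ne pol hsep (-Θ)] with ℓ hle hne h hh
    exact (hle h).lt_of_ne (hne h (sel ℓ) hh)
  exact ⟨expectedOneHot_mem_stdSimplex hmeas,
    fun u hu => isMinOn_dotProduct_add_fenchelConjugate hbdd hsub hu,
    fun u hu heq => eq_of_dotProduct_add_fenchelConjugate_eq (hbdd u hu) hsub hslope heq⟩

/-- for every `Θ`, the vector `E_{ℓ∼γ}[H(−Θ, ℓ)]` (the expected
one-hot vector at the a.s. unique maximizer of `h ↦ −Θ[h] + q(ℓ)[h]`, for any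
measurable selection `sel`) belongs to `Δ(ℬ)` and is the unique minimizer over
`u ∈ Δ(ℬ)` of `u ↦ ⟨Θ, u⟩ + R_𝒩(u)`; i.e. it equals `∇Φ_𝒩(−Θ)`. -/
theorem ftrl_equals_expected_ftpl {X A B : Type*}
    [Fintype X] [Fintype A] [Fintype B]
    [Nonempty X] [Nonempty A] [Nonempty B] [DecidableEq B]
    (pol : B → X → A)
    (hsep : ∀ h h' : B, h ≠ h' → ∃ x : X, pol h x ≠ pol h' x)
    (Θ : B → ℝ)
    (sel : ((X × A) → ℝ) → B)
    (hmeas : ∀ h : B,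
      Measurable fun ℓ : (X × A) → ℝ => (if sel ℓ = h then (1:ℝ) else 0))
    (hsel : ∀ᵐ ℓ : (X × A) → ℝ ∂(gaussianPerturbation X A), ∀ h' : B,
      -Θ h' + ∑ x : X, ℓ (x, pol h' x)
        ≤ -Θ (sel ℓ) + ∑ x : X, ℓ (x, pol (sel ℓ) x)) :
    (fun h : B => ∫ ℓ : (X × A) → ℝ, (if sel ℓ = h then (1:ℝ) else 0)
        ∂(gaussianPerturbation X A)) ∈ stdSimplex ℝ B ∧
    (∀ u ∈ stdSimplex ℝ B,
      (∑ h : B, Θ h * (∫ ℓ : (X × A) → ℝ, (if sel ℓ = h then (1:ℝ) else 0)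
            ∂(gaussianPerturbation X A)))
        + RN pol (fun h : B => ∫ ℓ : (X × A) → ℝ,
            (if sel ℓ = h then (1:ℝ) else 0) ∂(gaussianPerturbation X A))
      ≤ (∑ h : B, Θ h * u h) + RN pol u) ∧
    (∀ u ∈ stdSimplex ℝ B,
      (∑ h : B, Θ h * u h) + RN pol u
        = (∑ h : B, Θ h * (∫ ℓ : (X × A) → ℝ,
              (if sel ℓ = h then (1:ℝ) else 0) ∂(gaussianPerturbation X A)))
          + RN pol (fun h : B => ∫ ℓ : (X × A) → ℝ,
              (if sel ℓ = h then (1:ℝ) else 0) ∂(gaussianPerturbation X A)) →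
      u = fun h : B => ∫ ℓ : (X × A) → ℝ,
            (if sel ℓ = h then (1:ℝ) else 0) ∂(gaussianPerturbation X A)) :=
  ftrl_equals_expected_ftpl_general pol hsep Θ sel hmeas hsel
end

section
/- Under the Optimistic FTRL setup, Σ_{n=1}^N ⟨g_n, u_n⟩ − inf_{u∈Ω} Σ_{n=1}^N ⟨g_n, u⟩ ≤ (sup_{w∈Ω} R(w) − inf_{w∈Ω} R(w))/η + (1/η)·Σ_{n=1}^N [ D_{R*}(−ηΘ_n, −ηΘ̂_n) − D_{R*}(−ηΘ_{n−1}, −ηΘ̂_n) ]. -/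
open Finset

/-- Cumulative loss vectors: `Θ_n = Σ_{i<n} g_i` (so `Θ_0 = 0`). -/
noncomputable def ftrlCum {d : ℕ} (g : ℕ → (Fin d → ℝ)) (n : ℕ) : Fin d → ℝ :=
  ∑ i ∈ Finset.range n, g i

/-- Bregman divergence of `R*`: `D_{R*}(v, w) = R*(v) − R*(w) − ⟨v − w, ∇R*(w)⟩`,
where `Gstar = ∇R*`. -/
noncomputable def bregmanStar {d : ℕ} (Rstar : (Fin d → ℝ) → ℝ)
    (Gstar : (Fin d → ℝ) → (Fin d → ℝ)) (v w : Fin d → ℝ) : ℝ :=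
  Rstar v - Rstar w - ∑ i, (v i - w i) * Gstar w i

/-!
Writing `θ_n = −ηΘ_n` and `θ̂_n = −ηΘ̂_n`, the difference
`D_{R*}(θ_{n+1}, θ̂_n) − D_{R*}(θ_n, θ̂_n)` equals `R*(θ_{n+1}) − R*(θ_n) + η⟨g_n, u_n⟩`, because the
two divergences share the base point `θ̂_n` and `θ_{n+1} − θ_n = −η g_n`. Summing telescopes to
`η Σ ⟨g_n, u_n⟩ = R*(0) − R*(θ_N) + Σ_n [D_{R*}(θ_{n+1}, θ̂_n) − D_{R*}(θ_n, θ̂_n)]`.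
Finally `R*(0) = −R(∇R*(0)) ≤ −inf_Ω R`, and for every comparator `u ∈ Ω` the Fenchel–Young
inequality gives `R*(θ_N) ≥ −η Σ ⟨g_n, u⟩ − sup_Ω R`.
-/

open Matrix

variable {d : ℕ}

theorem ftrlCum_zero (g : ℕ → Fin d → ℝ) : ftrlCum g 0 = 0 := by
  simp [ftrlCum]

theorem ftrlCum_succ_sub (g : ℕ → Fin d → ℝ) (n : ℕ) : ftrlCum g (n + 1) - ftrlCum g n = g n := by
  rw [ftrlCum, sum_range_succ, ftrlCum, add_sub_cancel_left]

theorem ftrlCum_dotProduct (g : ℕ → Fin d → ℝ) (N : ℕ) (u : Fin d → ℝ) :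
    ftrlCum g N ⬝ᵥ u = ∑ n ∈ range N, g n ⬝ᵥ u :=
  sum_dotProduct _ g u

section Bregman

variable (Rstar : (Fin d → ℝ) → ℝ) (Gstar : (Fin d → ℝ) → Fin d → ℝ)

theorem bregmanStar_sub_bregmanStar (v v' w : Fin d → ℝ) :
    bregmanStar Rstar Gstar v w - bregmanStar Rstar Gstar v' w
      = Rstar v - Rstar v' - (v - v') ⬝ᵥ Gstar w := by
  change Rstar v - Rstar w - (v - w) ⬝ᵥ Gstar w - (Rstar v' - Rstar w - (v' - w) ⬝ᵥ Gstar w) = _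
  simp only [sub_dotProduct]
  ring

theorem sum_bregmanStar_sub_bregmanStar (θ w : ℕ → Fin d → ℝ) (N : ℕ) :
    ∑ n ∈ range N,
        (bregmanStar Rstar Gstar (θ (n + 1)) (w n) - bregmanStar Rstar Gstar (θ n) (w n))
      = Rstar (θ N) - Rstar (θ 0) - ∑ n ∈ range N, (θ (n + 1) - θ n) ⬝ᵥ Gstar (w n) := by
  simp only [bregmanStar_sub_bregmanStar, sum_sub_distrib, sum_range_sub (fun n => Rstar (θ n))]

theorem optimistic_ftrl_loss_eq_telescope (η : ℝ) (N : ℕ) (g ghat : ℕ → Fin d → ℝ) :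
    η * ∑ n ∈ range N, g n ⬝ᵥ Gstar ((-η) • (ftrlCum g n + ghat n))
      = Rstar 0 - Rstar ((-η) • ftrlCum g N)
        + ∑ n ∈ range N,
          (bregmanStar Rstar Gstar ((-η) • ftrlCum g (n + 1)) ((-η) • (ftrlCum g n + ghat n))
            - bregmanStar Rstar Gstar ((-η) • ftrlCum g n) ((-η) • (ftrlCum g n + ghat n))) := by
  have htelescope := sum_bregmanStar_sub_bregmanStar Rstar Gstar (fun n => (-η) • ftrlCum g n)
    (fun n => (-η) • (ftrlCum g n + ghat n)) N
  simp only [← smul_sub, ftrlCum_succ_sub, ftrlCum_zero, smul_zero, smul_dotProduct, smul_eq_mul,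
    ← mul_sum] at htelescope
  linarith

end Bregman

theorem optimistic_ftrl_regret_le_of_mem (Ω : Set (Fin d → ℝ)) (R : (Fin d → ℝ) → ℝ)
    (hbddA : BddAbove (R '' Ω)) (hbddB : BddBelow (R '' Ω))
    (Rstar : (Fin d → ℝ) → ℝ) (Gstar : (Fin d → ℝ) → (Fin d → ℝ))
    (hGmem : ∀ θ, Gstar θ ∈ Ω)
    (hattain : ∀ θ, Rstar θ = θ ⬝ᵥ Gstar θ - R (Gstar θ))
    (hsup : ∀ θ, ∀ w ∈ Ω, θ ⬝ᵥ w - R w ≤ Rstar θ)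
    (η : ℝ) (N : ℕ) (g ghat : ℕ → Fin d → ℝ) {u : Fin d → ℝ} (hu : u ∈ Ω) :
    η * (∑ n ∈ range N, g n ⬝ᵥ Gstar ((-η) • (ftrlCum g n + ghat n))
        - ∑ n ∈ range N, g n ⬝ᵥ u)
      ≤ sSup (R '' Ω) - sInf (R '' Ω)
        + ∑ n ∈ range N,
          (bregmanStar Rstar Gstar ((-η) • ftrlCum g (n + 1)) ((-η) • (ftrlCum g n + ghat n))
            - bregmanStar Rstar Gstar ((-η) • ftrlCum g n) ((-η) • (ftrlCum g n + ghat n))) := by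
  have hloss := optimistic_ftrl_loss_eq_telescope Rstar Gstar η N g ghat
  have hstart : Rstar 0 ≤ -sInf (R '' Ω) := by
    rw [hattain 0, zero_dotProduct, zero_sub, neg_le_neg_iff]
    exact csInf_le hbddB ⟨_, hGmem 0, rfl⟩
  have hend : -η * ∑ n ∈ range N, g n ⬝ᵥ u - sSup (R '' Ω)
      ≤ Rstar ((-η) • ftrlCum g N) := by
    rw [← smul_eq_mul, ← ftrlCum_dotProduct, ← smul_dotProduct]
    exact (sub_le_sub_left (le_csSup hbddA ⟨u, hu, rfl⟩) _).trans (hsup _ u hu)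
  linarith

theorem optimistic_ftrl_regret_general {d : ℕ}
    (Ω : Set (Fin d → ℝ)) (hΩ : Ω.Nonempty)
    (R : (Fin d → ℝ) → ℝ)
    (hbddA : BddAbove (R '' Ω)) (hbddB : BddBelow (R '' Ω))
    (Rstar : (Fin d → ℝ) → ℝ) (Gstar : (Fin d → ℝ) → (Fin d → ℝ))
    (hGmem : ∀ θ, Gstar θ ∈ Ω)
    (hattain : ∀ θ, Rstar θ = (∑ i, θ i * Gstar θ i) - R (Gstar θ))
    (hsup : ∀ θ, ∀ w ∈ Ω, (∑ i, θ i * w i) - R w ≤ Rstar θ)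
    (η : ℝ) (hη : 0 < η) (N : ℕ) (g ghat : ℕ → Fin d → ℝ) :
    (∑ n ∈ Finset.range N,
        ∑ i, g n i * Gstar ((-η) • (ftrlCum g n + ghat n)) i)
      - sInf ((fun u : Fin d → ℝ => ∑ n ∈ Finset.range N, ∑ i, g n i * u i) '' Ω)
    ≤ (sSup (R '' Ω) - sInf (R '' Ω)) / η
      + (1 / η) * ∑ n ∈ Finset.range N,
          (bregmanStar Rstar Gstar ((-η) • ftrlCum g (n + 1))
              ((-η) • (ftrlCum g n + ghat n))
            - bregmanStar Rstar Gstar ((-η) • ftrlCum g n)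
                ((-η) • (ftrlCum g n + ghat n))) := by
  refine sub_le_comm.mp (le_csInf (hΩ.image _) ?_)
  rintro _ ⟨u, hu, rfl⟩
  rw [sub_le_comm, one_div_mul_eq_div, ← add_div, le_div_iff₀ hη, mul_comm]
  exact optimistic_ftrl_regret_le_of_mem Ω R hbddA hbddB Rstar Gstar hGmem hattain hsup η N g ghat
    hu

/-- the Optimistic FTRL regret bound
`Σ_n ⟨g_n, u_n⟩ − inf_{u∈Ω} Σ_n ⟨g_n, u⟩
  ≤ (sup_Ω R − inf_Ω R)/η + (1/η) Σ_n [D_{R*}(−ηΘ_n, −ηΘ̂_n) − D_{R*}(−ηΘ_{n−1}, −ηΘ̂_n)]`,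
where `Θ̂_n = Θ_{n−1} + ĝ_n` and `u_n = ∇R*(−ηΘ̂_n)`. -/
theorem optimistic_ftrl_regret {d : ℕ}
    (Ω : Set (Fin d → ℝ)) (hΩ : Ω.Nonempty)
    (R : (Fin d → ℝ) → ℝ)
    (hconv : ConvexOn ℝ Ω R)
    (hlsc : LowerSemicontinuousOn R Ω)
    (hbddA : BddAbove (R '' Ω)) (hbddB : BddBelow (R '' Ω))
    (Rstar : (Fin d → ℝ) → ℝ) (Gstar : (Fin d → ℝ) → (Fin d → ℝ))
    (hGmem : ∀ θ, Gstar θ ∈ Ω)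
    (hattain : ∀ θ, Rstar θ = (∑ i, θ i * Gstar θ i) - R (Gstar θ))
    (hsup : ∀ θ, ∀ w ∈ Ω, (∑ i, θ i * w i) - R w ≤ Rstar θ)
    (η : ℝ) (hη : 0 < η) (N : ℕ) (g ghat : ℕ → Fin d → ℝ) :
    (∑ n ∈ Finset.range N,
        ∑ i, g n i * Gstar ((-η) • (ftrlCum g n + ghat n)) i)
      - sInf ((fun u : Fin d → ℝ => ∑ n ∈ Finset.range N, ∑ i, g n i * u i) '' Ω)
    ≤ (sSup (R '' Ω) - sInf (R '' Ω)) / η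
      + (1 / η) * ∑ n ∈ Finset.range N,
          (bregmanStar Rstar Gstar ((-η) • ftrlCum g (n + 1))
              ((-η) • (ftrlCum g n + ghat n))
            - bregmanStar Rstar Gstar ((-η) • ftrlCum g n)
                ((-η) • (ftrlCum g n + ghat n))) :=
  optimistic_ftrl_regret_general Ω hΩ R hbddA hbddB Rstar Gstar hGmem hattain hsup η hη N g ghat
end

section
/- If u* = (u*_x, u*_y) ∈ Δ_{2m} is an ε-approximate VI solution with ε = (4m² + 10m + 4)^{−6}, then ‖u*_x‖₁ · ‖u*_y‖₁ ≥ 2/9 (indeed ‖u*_x‖₁ ∈ [1/3, 2/3]). -/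
/-!
Write `X = ‖u_x‖₁` and `Y = ‖u_y‖₁`, so `X + Y = 1`. Testing the VI inequality against a vertex
`e_a` of the simplex gives `⟨θ(u), u⟩ ≤ θ(u)_a + ε`. Since `V` and `W` have entries in `[0,1]`,
every `x`-coordinate of `θ(u)` lies in `[18X - Y/3, 18X]` and every `y`-coordinate in
`[18Y - X/3, 18Y]`. Hence `18X² + 18Y² - (2/3)XY ≤ ⟨θ(u), u⟩ ≤ min (18X, 18Y) + ε`, and with
`X + Y = 1` and `ε ≤ 1` this quadratic inequality forces `X, Y ≥ 1/3`, so `XY ≥ 2/9`.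
-/

/-- The vector field `θ(u) = (1/3)·C·u` with
`C = [[54·1_{m×m}, −V], [−Wᵀ, 54·1_{m×m}]]`. -/
noncomputable def viField {m : ℕ} (V W : Matrix (Fin m) (Fin m) ℝ)
    (u : Fin m ⊕ Fin m → ℝ) : Fin m ⊕ Fin m → ℝ :=
  Sum.elim
    (fun i => (1 / 3) * (54 * (∑ j, u (Sum.inl j)) - ∑ j, V i j * u (Sum.inr j)))
    (fun j => (1 / 3) * (-(∑ i, W i j * u (Sum.inl i)) + 54 * ∑ i, u (Sum.inr i)))

open Finset

theorem sum_mul_le_add_of_forall_stdSimplex {ι : Type*} [Fintype ι] [DecidableEq ι]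
    {F u : ι → ℝ} {ε : ℝ} (hVI : ∀ v ∈ stdSimplex ℝ ι, -ε ≤ ∑ k, F k * (v k - u k)) (a : ι) :
    ∑ k, F k * u k ≤ F a + ε := by
  have h := hVI _ (single_mem_stdSimplex ℝ a)
  simp only [mul_sub, sum_sub_distrib, Pi.single_apply, mul_ite, mul_one, mul_zero,
    sum_ite_eq', mem_univ, if_true] at h
  linarith

theorem sum_mul_mem_Icc_of_mem_Icc {ι : Type*} [Fintype ι] {w u : ι → ℝ}
    (hw : ∀ j, w j ∈ Set.Icc (0 : ℝ) 1) (hu : ∀ j, 0 ≤ u j) :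
    ∑ j, w j * u j ∈ Set.Icc 0 (∑ j, u j) :=
  ⟨sum_nonneg fun j _ => mul_nonneg (hw j).1 (hu j),
    sum_le_sum fun j _ => mul_le_of_le_one_left (hu j) (hw j).2⟩

theorem mul_sum_le_sum_mul_of_le {ι : Type*} [Fintype ι] {F u : ι → ℝ} {c : ℝ}
    (hF : ∀ k, c ≤ F k) (hu : ∀ k, 0 ≤ u k) : c * ∑ k, u k ≤ ∑ k, F k * u k := by
  rw [mul_sum]
  exact sum_le_sum fun k _ => mul_le_mul_of_nonneg_right (hF k) (hu k)

section viField

variable {m : ℕ} {V W : Matrix (Fin m) (Fin m) ℝ} {u : Fin m ⊕ Fin m → ℝ}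

theorem viField_inl_mem_Icc (hV : ∀ i j, V i j ∈ Set.Icc (0 : ℝ) 1) (hu : ∀ k, 0 ≤ u k)
    (i : Fin m) :
    viField V W u (Sum.inl i) ∈
      Set.Icc (18 * ∑ j, u (Sum.inl j) - (∑ j, u (Sum.inr j)) / 3) (18 * ∑ j, u (Sum.inl j)) := by
  have h := sum_mul_mem_Icc_of_mem_Icc (hV i) fun j => hu (Sum.inr j)
  simp only [viField, Sum.elim_inl, Set.mem_Icc] at h ⊢
  constructor <;> linarith [h.1, h.2]

theorem viField_inr_mem_Icc (hW : ∀ i j, W i j ∈ Set.Icc (0 : ℝ) 1) (hu : ∀ k, 0 ≤ u k)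
    (j : Fin m) :
    viField V W u (Sum.inr j) ∈
      Set.Icc (18 * ∑ i, u (Sum.inr i) - (∑ i, u (Sum.inl i)) / 3) (18 * ∑ i, u (Sum.inr i)) := by
  have h := sum_mul_mem_Icc_of_mem_Icc (fun i => hW i j) fun i => hu (Sum.inl i)
  simp only [viField, Sum.elim_inr, Set.mem_Icc] at h ⊢
  constructor <;> linarith [h.1, h.2]

theorem quadratic_le_sum_viField_mul (hV : ∀ i j, V i j ∈ Set.Icc (0 : ℝ) 1)
    (hW : ∀ i j, W i j ∈ Set.Icc (0 : ℝ) 1) (hu : ∀ k, 0 ≤ u k) :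
    18 * (∑ i, u (Sum.inl i)) ^ 2 + 18 * (∑ j, u (Sum.inr j)) ^ 2
        - 2 / 3 * ((∑ i, u (Sum.inl i)) * ∑ j, u (Sum.inr j)) ≤
      ∑ k, viField V W u k * u k := by
  have hx := mul_sum_le_sum_mul_of_le (fun i => (viField_inl_mem_Icc (W := W) hV hu i).1)
    fun i => hu (Sum.inl i)
  have hy := mul_sum_le_sum_mul_of_le (fun j => (viField_inr_mem_Icc (V := V) hW hu j).1)
    fun j => hu (Sum.inr j)
  rw [Fintype.sum_sum_type]
  nlinarith

end viField

theorem one_third_le_of_quadratic_le {X Y ε : ℝ} (hXY : X + Y = 1) (hε : ε ≤ 1)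
    (h : 18 * X ^ 2 + 18 * Y ^ 2 - 2 / 3 * (X * Y) ≤ 18 * X + ε) : 1 / 3 ≤ X := by
  -- With `Y = 1 - X` this reads `110X² - 164X + 54 ≤ 3ε`, and the left side decreases on
  -- `X ≤ 1/3`, where it is at least `104/9 > 3`.
  obtain rfl : Y = 1 - X := by linarith
  nlinarith [sq_nonneg (X - 1 / 3)]

/-- any `ε`-approximate VI solution `u* = (u*_x, u*_y) ∈ Δ_{2m}`
with `ε = (4m² + 10m + 4)^{−6}` satisfies `‖u*_x‖₁·‖u*_y‖₁ ≥ 2/9`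
(indeed `‖u*_x‖₁ ∈ [1/3, 2/3]`). -/
theorem vi_approx_solution_mass_bound (m : ℕ) (hm : 1 ≤ m)
    (V W : Matrix (Fin m) (Fin m) ℝ)
    (hV : ∀ i j, V i j ∈ Set.Icc (0:ℝ) 1)
    (hW : ∀ i j, W i j ∈ Set.Icc (0:ℝ) 1)
    (u : Fin m ⊕ Fin m → ℝ)
    (hu : u ∈ stdSimplex ℝ (Fin m ⊕ Fin m))
    (hVI : ∀ v ∈ stdSimplex ℝ (Fin m ⊕ Fin m),
      -(((4 * (m : ℝ) ^ 2 + 10 * m + 4) ^ (6 : ℕ))⁻¹)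
        ≤ ∑ k, viField V W u k * (v k - u k)) :
    2 / 9 ≤ (∑ i, u (Sum.inl i)) * (∑ j, u (Sum.inr j)) ∧
    (∑ i, u (Sum.inl i)) ∈ Set.Icc (1/3 : ℝ) (2/3 : ℝ) := by
  have hε : ((4 * (m : ℝ) ^ 2 + 10 * m + 4) ^ (6 : ℕ))⁻¹ ≤ 1 :=
    inv_le_one_of_one_le₀ (one_le_pow₀ (by linarith [sq_nonneg (m : ℝ), m.cast_nonneg (α := ℝ)]))
  let i₀ : Fin m := ⟨0, hm⟩
  have hx := sum_mul_le_add_of_forall_stdSimplex hVI (Sum.inl i₀)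
  have hy := sum_mul_le_add_of_forall_stdSimplex hVI (Sum.inr i₀)
  have hθx := (viField_inl_mem_Icc (W := W) hV hu.1 i₀).2
  have hθy := (viField_inr_mem_Icc (V := V) hW hu.1 i₀).2
  have hQ := quadratic_le_sum_viField_mul hV hW hu.1
  have hXY : (∑ i, u (Sum.inl i)) + ∑ j, u (Sum.inr j) = 1 := by
    simpa only [Fintype.sum_sum_type] using hu.2
  set X := ∑ i, u (Sum.inl i)
  set Y := ∑ j, u (Sum.inr j)
  have hX := one_third_le_of_quadratic_le hXY hε (by linarith)
  have hY := one_third_le_of_quadratic_le (X := Y) (Y := X) (by linarith) hε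
    (by linarith [mul_comm X Y])
  refine ⟨?_, hX, by linarith⟩
  nlinarith [mul_nonneg (sub_nonneg.2 hX) (sub_nonneg.2 hY)]
end

section
/- If u* = (u*_x, u*_y) ∈ Δ_{2m} is an ε-approximate VI solution with ε = (4m² + 10m + 4)^{−6}, then ‖u*_x‖₁ > 0 and ‖u*_y‖₁ > 0, and the normalized pair x̂ = u*_x/‖u*_x‖₁, ŷ = u*_y/‖u*_y‖₁ is an m^{−12}-approximate Nash equilibrium of the bimatrix game (V, W): for all x ∈ Δ_m, x̂ᵀ V ŷ ≥ xᵀ V ŷ − m^{−12}, and for all y ∈ Δ_m, x̂ᵀ W ŷ ≥ x̂ᵀ W y − m^{−12}. -/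
open Matrix Finset

section Bilinear

variable {ι κ : Type*} [Fintype ι] [Fintype κ]

theorem sum_sum_mul_mul_eq_dotProduct_mulVec (x : ι → ℝ) (M : Matrix ι κ ℝ) (y : κ → ℝ) :
    ∑ i, ∑ j, x i * M i j * y j = x ⬝ᵥ M *ᵥ y := by
  simp only [dotProduct, mulVec, Finset.mul_sum, mul_assoc]

theorem dotProduct_mulVec_le_sum_mul_sum {x : ι → ℝ} {M : Matrix ι κ ℝ} {y : κ → ℝ}
    (hx : 0 ≤ x) (hM : ∀ i j, M i j ≤ 1) (hy : 0 ≤ y) :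
    x ⬝ᵥ M *ᵥ y ≤ (∑ i, x i) * ∑ j, y j := by
  have hMy : M *ᵥ y ≤ fun _ => ∑ j, y j := fun i =>
    Finset.sum_le_sum fun j _ => mul_le_of_le_one_left (hy j) (hM i j)
  calc x ⬝ᵥ M *ᵥ y ≤ x ⬝ᵥ fun _ => ∑ j, y j := dotProduct_le_dotProduct_of_nonneg_left hMy hx
    _ = (∑ i, x i) * ∑ j, y j := by simp only [dotProduct, Finset.sum_mul]

theorem sum_elim_mem_stdSimplex_iff {s : ι → ℝ} {t : κ → ℝ} :
    Sum.elim s t ∈ stdSimplex ℝ (ι ⊕ κ) ↔ 0 ≤ s ∧ 0 ≤ t ∧ ∑ i, s i + ∑ j, t j = 1 := by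
  simp only [stdSimplex, Set.mem_ofPred_eq, Sum.forall, Sum.elim_inl, Sum.elim_inr,
    Fintype.sum_sum_type, Pi.le_def, Pi.zero_apply, and_assoc]

end Bilinear

def IsApproxVISolution {ι : Type*} [Fintype ι] (θ : (ι → ℝ) → ι → ℝ) (ε : ℝ) (u : ι → ℝ) :
    Prop :=
  ∀ v ∈ stdSimplex ℝ ι, -ε ≤ ∑ k, θ u k * (v k - u k)

theorem IsApproxVISolution.sum_mul_sub_le {ι : Type*} [Fintype ι] {θ : (ι → ℝ) → ι → ℝ}
    {ε : ℝ} {u v : ι → ℝ} (h : IsApproxVISolution θ ε u) (hv : v ∈ stdSimplex ℝ ι) :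
    ∑ k, θ u k * u k - ε ≤ ∑ k, θ u k * v k := by
  have := h v hv
  simp only [mul_sub, Finset.sum_sub_distrib] at this
  linarith

theorem forty_eight_mul_inv_le {m : ℝ} (hm : 0 < m) :
    48 * ((4 * m ^ 2 + 10 * m + 4) ^ 6)⁻¹ ≤ (m ^ 12)⁻¹ := by
  have hpow : (4 * m ^ 2) ^ 6 ≤ (4 * m ^ 2 + 10 * m + 4) ^ 6 :=
    pow_le_pow_left₀ (by positivity) (by linarith) 6
  rw [← div_eq_mul_inv, div_le_iff₀ (by positivity), inv_mul_eq_div, le_div_iff₀ (by positivity)]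
  nlinarith [pow_pos hm 12]

section viField

variable {m : ℕ}

theorem viField_inl (V W : Matrix (Fin m) (Fin m) ℝ) (p q : Fin m → ℝ) (i : Fin m) :
    viField V W (Sum.elim p q) (Sum.inl i) = 18 * ∑ i, p i - (V *ᵥ q) i / 3 := by
  simp only [viField, Sum.elim_inl, Sum.elim_inr, mulVec, dotProduct]
  ring

theorem viField_inr (V W : Matrix (Fin m) (Fin m) ℝ) (p q : Fin m → ℝ) (j : Fin m) :
    viField V W (Sum.elim p q) (Sum.inr j) = 18 * ∑ j, q j - (p ᵥ* W) j / 3 := by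
  simp only [viField, Sum.elim_inl, Sum.elim_inr, vecMul, dotProduct, mul_comm (p _)]
  ring

theorem sum_viField_mul (V W : Matrix (Fin m) (Fin m) ℝ) (p q s t : Fin m → ℝ) :
    ∑ k, viField V W (Sum.elim p q) k * Sum.elim s t k =
      18 * (∑ i, p i) * (∑ i, s i) + 18 * (∑ j, q j) * (∑ j, t j)
        - (s ⬝ᵥ V *ᵥ q + p ⬝ᵥ W *ᵥ t) / 3 := by
  simp only [Fintype.sum_sum_type, Sum.elim_inl, Sum.elim_inr, viField_inl, viField_inr, sub_mul,
    Finset.sum_sub_distrib, ← Finset.mul_sum, div_mul_eq_mul_div, ← Finset.sum_div]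
  rw [← dotProduct, ← dotProduct, dotProduct_comm (V *ᵥ q), ← dotProduct_mulVec]
  ring

variable {V W : Matrix (Fin m) (Fin m) ℝ} {ε : ℝ} {p q : Fin m → ℝ}

theorem IsApproxVISolution.viField_swap (h : IsApproxVISolution (viField V W) ε (Sum.elim p q)) :
    IsApproxVISolution (viField Wᵀ Vᵀ) ε (Sum.elim q p) := by
  intro v hv
  obtain ⟨t, s, rfl⟩ : ∃ t s, v = Sum.elim t s := ⟨_, _, (Sum.elim_comp_inl_inr v).symm⟩
  obtain ⟨ht, hs, hts⟩ := sum_elim_mem_stdSimplex_iff.1 hv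
  have := h (Sum.elim s t) (sum_elim_mem_stdSimplex_iff.2 ⟨hs, ht, by linarith⟩)
  simp only [mul_sub, Finset.sum_sub_distrib, sum_viField_mul,
    dotProduct_transpose_mulVec] at this ⊢
  linarith

theorem IsApproxVISolution.quarter_le_sum_inl
    (h : IsApproxVISolution (viField V W) ε (Sum.elim p q))
    (hu : Sum.elim p q ∈ stdSimplex ℝ (Fin m ⊕ Fin m)) (hV : ∀ i j, V i j ∈ Set.Icc (0 : ℝ) 1)
    (hW : ∀ i j, W i j ≤ 1) (hε : ε ≤ 1) (i₀ : Fin m) : 1 / 4 ≤ ∑ i, p i := by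
  obtain ⟨hp, hq, hpq⟩ := sum_elim_mem_stdSimplex_iff.1 hu
  have hvertex : Sum.elim (Pi.single i₀ 1) 0 ∈ stdSimplex ℝ (Fin m ⊕ Fin m) :=
    sum_elim_mem_stdSimplex_iff.2 ⟨(single_mem_stdSimplex ℝ i₀).1, le_rfl, by simp⟩
  have htest := h.sum_mul_sub_le hvertex
  simp only [sum_viField_mul, single_dotProduct, dotProduct_zero, mulVec_zero,
    Finset.sum_pi_single', Finset.mem_univ, if_true, Pi.zero_apply, Finset.sum_const_zero] at htest
  have hVq : 0 ≤ (V *ᵥ q) i₀ := dotProduct_nonneg_of_nonneg (fun j => (hV i₀ j).1) hq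
  have hA := dotProduct_mulVec_le_sum_mul_sum hp (fun i j => (hV i j).2) hq
  have hB := dotProduct_mulVec_le_sum_mul_sum hp hW hq
  nlinarith

theorem IsApproxVISolution.dotProduct_mulVec_le
    (h : IsApproxVISolution (viField V W) ε (Sum.elim p q))
    (hu : Sum.elim p q ∈ stdSimplex ℝ (Fin m ⊕ Fin m)) (hε : 0 ≤ ε)
    (ha : 1 / 4 ≤ ∑ i, p i) (hb : 1 / 4 ≤ ∑ j, q j) {x : Fin m → ℝ}
    (hx : x ∈ stdSimplex ℝ (Fin m)) :
    x ⬝ᵥ V *ᵥ (fun j => q j / ∑ j', q j') ≤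
      (fun i => p i / ∑ i', p i') ⬝ᵥ V *ᵥ (fun j => q j / ∑ j', q j') + 48 * ε := by
  obtain ⟨-, hq, hpq⟩ := sum_elim_mem_stdSimplex_iff.1 hu
  set a := ∑ i, p i
  set b := ∑ j, q j
  have hdeviation : a * (x ⬝ᵥ V *ᵥ q) ≤ p ⬝ᵥ V *ᵥ q + 3 * ε := by
    have hv : Sum.elim (a • x) q ∈ stdSimplex ℝ (Fin m ⊕ Fin m) := by
      refine sum_elim_mem_stdSimplex_iff.2 ⟨smul_nonneg (by linarith) hx.1, hq, ?_⟩
      simp only [Pi.smul_apply, smul_eq_mul, ← Finset.mul_sum, hx.2]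
      linarith
    have htest := h.sum_mul_sub_le hv
    simp only [sum_viField_mul, Pi.smul_apply, smul_eq_mul, ← Finset.mul_sum, hx.2,
      smul_dotProduct] at htest
    linarith
  have hnormalize (c : ℝ) (y : Fin m → ℝ) : (fun j => y j / c) = c⁻¹ • y :=
    funext fun j => div_eq_inv_mul (y j) c
  rw [hnormalize a, hnormalize b]
  simp only [mulVec_smul, dotProduct_smul, smul_dotProduct, smul_eq_mul]
  have hab : (a * b)⁻¹ ≤ 16 := by
    rw [inv_le_comm₀ (by positivity) (by norm_num)]
    nlinarith
  calc b⁻¹ * (x ⬝ᵥ V *ᵥ q) = (a * b)⁻¹ * (a * (x ⬝ᵥ V *ᵥ q)) := by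
        field_simp
    _ ≤ (a * b)⁻¹ * (p ⬝ᵥ V *ᵥ q + 3 * ε) := by gcongr
    _ = b⁻¹ * (a⁻¹ * (p ⬝ᵥ V *ᵥ q)) + (a * b)⁻¹ * (3 * ε) := by
        rw [mul_inv]
        ring
    _ ≤ b⁻¹ * (a⁻¹ * (p ⬝ᵥ V *ᵥ q)) + 48 * ε := by
        linarith [mul_le_mul_of_nonneg_right hab (by positivity : 0 ≤ 3 * ε)]

end viField

/-- any `ε`-approximate VI solution `u* = (u*_x, u*_y) ∈ Δ_{2m}`
with `ε = (4m² + 10m + 4)^{−6}` has `‖u*_x‖₁ > 0`, `‖u*_y‖₁ > 0`, and the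
normalized pair `(x̂, ŷ) = (u*_x/‖u*_x‖₁, u*_y/‖u*_y‖₁)` is an
`m^{−12}`-approximate Nash equilibrium of the bimatrix game `(V, W)`. -/
theorem vi_approx_solution_yields_nash (m : ℕ) (hm : 1 ≤ m)
    (V W : Matrix (Fin m) (Fin m) ℝ)
    (hV : ∀ i j, V i j ∈ Set.Icc (0:ℝ) 1)
    (hW : ∀ i j, W i j ∈ Set.Icc (0:ℝ) 1)
    (u : Fin m ⊕ Fin m → ℝ)
    (hu : u ∈ stdSimplex ℝ (Fin m ⊕ Fin m))
    (hVI : ∀ v ∈ stdSimplex ℝ (Fin m ⊕ Fin m),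
      -(((4 * (m : ℝ) ^ 2 + 10 * m + 4) ^ (6 : ℕ))⁻¹)
        ≤ ∑ k, viField V W u k * (v k - u k)) :
    0 < (∑ i, u (Sum.inl i)) ∧ 0 < (∑ j, u (Sum.inr j)) ∧
    (∀ x ∈ stdSimplex ℝ (Fin m),
      (∑ i, ∑ j, x i * V i j * (u (Sum.inr j) / ∑ j', u (Sum.inr j')))
          - (((m : ℝ) ^ (12 : ℕ))⁻¹)
        ≤ ∑ i, ∑ j, (u (Sum.inl i) / ∑ i', u (Sum.inl i')) * V i j
            * (u (Sum.inr j) / ∑ j', u (Sum.inr j'))) ∧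
    (∀ y ∈ stdSimplex ℝ (Fin m),
      (∑ i, ∑ j, (u (Sum.inl i) / ∑ i', u (Sum.inl i')) * W i j * y j)
          - (((m : ℝ) ^ (12 : ℕ))⁻¹)
        ≤ ∑ i, ∑ j, (u (Sum.inl i) / ∑ i', u (Sum.inl i')) * W i j
            * (u (Sum.inr j) / ∑ j', u (Sum.inr j'))) := by
  obtain ⟨p, q, rfl⟩ : ∃ p q, u = Sum.elim p q := ⟨_, _, (Sum.elim_comp_inl_inr u).symm⟩
  have hε := forty_eight_mul_inv_le (Nat.cast_pos.2 hm : (0 : ℝ) < m)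
  have hε₀ : 0 ≤ ((4 * (m : ℝ) ^ 2 + 10 * m + 4) ^ 6)⁻¹ := by positivity
  have hε₁ : ((4 * (m : ℝ) ^ 2 + 10 * m + 4) ^ 6)⁻¹ ≤ 1 := by
    have : ((m : ℝ) ^ 12)⁻¹ ≤ 1 := inv_le_one_of_one_le₀ (one_le_pow₀ (by exact_mod_cast hm))
    linarith
  obtain ⟨hp, hq, hpq⟩ := sum_elim_mem_stdSimplex_iff.1 hu
  have hu' : Sum.elim q p ∈ stdSimplex ℝ (Fin m ⊕ Fin m) :=
    sum_elim_mem_stdSimplex_iff.2 ⟨hq, hp, by linarith⟩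
  have hsol : IsApproxVISolution (viField V W) _ (Sum.elim p q) := hVI
  have hsol' := hsol.viField_swap
  have ha := hsol.quarter_le_sum_inl hu hV (fun i j => (hW i j).2) hε₁ ⟨0, hm⟩
  have hb := hsol'.quarter_le_sum_inl hu' (fun i j => hW j i) (fun i j => (hV j i).2) hε₁ ⟨0, hm⟩
  simp only [Sum.elim_inl, Sum.elim_inr, sum_sum_mul_mul_eq_dotProduct_mulVec]
  refine ⟨by linarith, by linarith, fun x hx => ?_, fun y hy => ?_⟩
  · linarith [hsol.dotProduct_mulVec_le hu hε₀ ha hb hx]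
  · have := hsol'.dotProduct_mulVec_le hu' hε₀ hb ha hy
    rw [dotProduct_transpose_mulVec, dotProduct_transpose_mulVec] at this
    linarith
end

section
/- Let u* ∈ Δ(ℬ), let T ≥ 1, and let h_1, …, h_T be i.i.d. samples from the probability distribution u* on ℬ. Let u = (1/T)·Σ_{j=1}^T e_{h_j} ∈ Δ(ℬ) be the empirical average of the one-hot vectors e_{h_j}. Then for any δ ∈ (0,1], with probability at least 1 − δ over the draw of h_1, …, h_T, simultaneously for every s ∈ 𝒮: Σ_{a∈𝒜} |π_u(a|s) − π_{u*}(a|s)| ≤ √( 2·A·(ln S + ln(2/δ)) / T ). -/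
/-!
For a state `s` and a set of actions `C`, the mass `π_u(C|s)` is the mean of the `T` i.i.d.
`[0,1]`-valued variables `1[h_j(s) ∈ C]`, whose expectation is `π_{u*}(C|s)`, so by Hoeffding's
inequality it exceeds `π_{u*}(C|s) + ε/2` with probability at most `exp(-Tε²/2)`. Both policies are
probability vectors, hence `‖π_u(·|s) − π_{u*}(·|s)‖₁ = 2 max_C (π_u(C|s) − π_{u*}(C|s))`, and a
union bound over the `S·2^A` pairs `(s, C)` leaves a failure probability of at most
`S·2^A·exp(-Tε²/2)`, which is `≤ δ` for the stated `ε`.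
-/

open MeasureTheory

noncomputable def discreteMeasure {B : Type*} [Fintype B] [MeasurableSpace B]
    (u : B → ℝ) : Measure B :=
  ∑ h : B, ENNReal.ofReal (u h) • Measure.dirac h

open ProbabilityTheory Finset

section DiscreteMeasure

variable {B : Type*} [Fintype B] [MeasurableSpace B]

lemma isProbabilityMeasure_discreteMeasure {u : B → ℝ} (hu : u ∈ stdSimplex ℝ B) :
    IsProbabilityMeasure (discreteMeasure u) := by
  constructor
  simp [discreteMeasure, ← ENNReal.ofReal_sum_of_nonneg fun b _ => hu.1 b, hu.2]

lemma integral_discreteMeasure [MeasurableSingletonClass B] {u : B → ℝ} (hu : ∀ b, 0 ≤ u b)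
    (g : B → ℝ) : ∫ b, g b ∂discreteMeasure u = ∑ b, u b * g b := by
  rw [discreteMeasure, integral_finsetSum_measure fun b _ => ?_]
  · simp [integral_smul_measure, ENNReal.toReal_ofReal (hu _)]
  · exact (integrable_dirac enorm_lt_top).smul_measure ENNReal.ofReal_ne_top

end DiscreteMeasure

theorem measureReal_pi_sum_sub_integral_ge_le {Ω ι : Type*} [MeasurableSpace Ω] [Fintype ι]
    (μ : Measure Ω) [IsProbabilityMeasure μ] {f : Ω → ℝ} (hf : Measurable f)
    (hf01 : ∀ x, f x ∈ Set.Icc 0 1) {t : ℝ} (ht : 0 ≤ t) :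
    (Measure.pi fun _ : ι => μ).real {ω | Fintype.card ι * t ≤ ∑ i, (f (ω i) - μ[f])}
      ≤ Real.exp (-(2 * Fintype.card ι * t ^ 2)) := by
  have hindep : iIndepFun (fun i (ω : ι → Ω) => f (ω i) - μ[f]) (Measure.pi fun _ => μ) :=
    iIndepFun_pi (X := fun _ x => f x - μ[f]) fun _ => (hf.sub_const _).aemeasurable
  have hsubG := hasSubgaussianMGF_of_mem_Icc hf.aemeasurable (ae_of_all μ hf01)
  have hsubG_pi (i : ι) : HasSubgaussianMGF (fun ω : ι → Ω => f (ω i) - μ[f])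
      ((‖(1:ℝ) - 0‖₊ / 2) ^ 2) (Measure.pi fun _ => μ) :=
    HasSubgaussianMGF.of_map (X := fun x => f x - μ[f]) (measurable_pi_apply i).aemeasurable
      (by rwa [(measurePreserving_eval (fun _ => μ) i).map_eq])
  refine (HasSubgaussianMGF.measure_sum_ge_le_of_iIndepFun hindep (s := univ)
    (fun i _ => hsubG_pi i) (mul_nonneg (Nat.cast_nonneg _) ht)).trans_eq ?_
  congr 1
  rcases eq_or_ne (Fintype.card ι) 0 with h | h
  · simp [h]
  · simp only [sub_zero, nnnorm_one, one_div, inv_pow, sum_const, card_univ, nsmul_eq_mul,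
      NNReal.coe_mul, NNReal.coe_natCast, NNReal.coe_inv, NNReal.coe_pow, NNReal.coe_ofNat]
    field_simp

lemma card_mul_two_pow_mul_exp_le {n m : ℕ} (hn : 1 ≤ n) (hm : 1 ≤ m) {δ : ℝ}
    (hδ : δ ∈ Set.Ioc (0:ℝ) 1) :
    n * 2 ^ m * Real.exp (-(m * (Real.log n + Real.log (2 / δ)))) ≤ δ := by
  obtain ⟨hδ0, hδ1⟩ := hδ
  have hn0 : (0:ℝ) < n := by exact_mod_cast hn
  have hexp : Real.exp (-(m * (Real.log n + Real.log (2 / δ)))) = (δ / (2 * n)) ^ m := by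
    rw [neg_mul_eq_mul_neg, Real.exp_nat_mul, neg_add, Real.exp_add, Real.exp_neg, Real.exp_neg,
      Real.exp_log hn0, Real.exp_log (by positivity)]
    field_simp
  have hle : (δ / n) ^ m ≤ δ / n :=
    pow_le_of_le_one (by positivity)
      ((div_le_one hn0).2 (hδ1.trans (Nat.one_le_cast.2 hn))) (by omega)
  calc n * 2 ^ m * Real.exp (-(m * (Real.log n + Real.log (2 / δ))))
      = n * (δ / n) ^ m := by
        rw [hexp, div_mul_eq_div_div, div_pow, div_pow, div_pow]
        field_simp
    _ ≤ n * (δ / n) := by gcongr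
    _ = δ := by field_simp

lemma sum_abs_eq_two_mul_sum_pos {ι : Type*} (s : Finset ι) {x : ι → ℝ}
    (hx : ∑ i ∈ s, x i = 0) :
    ∑ i ∈ s, |x i| = 2 * ∑ i ∈ s with 0 < x i, x i := by
  have hpos : ∑ i ∈ s with 0 < x i, |x i| = ∑ i ∈ s with 0 < x i, x i :=
    sum_congr rfl fun i hi => abs_of_pos (mem_filter.1 hi).2
  have hneg : ∑ i ∈ s with ¬ 0 < x i, |x i| = -∑ i ∈ s with ¬ 0 < x i, x i := by
    rw [← sum_neg_distrib]
    exact sum_congr rfl fun i hi => abs_of_nonpos (not_lt.1 (mem_filter.1 hi).2)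
  rw [← sum_filter_add_sum_filter_not s (0 < x ·)] at hx ⊢
  linarith

section MixedPolicy

variable {S A B : Type*} [Fintype B] [DecidableEq A]

def mixedPolicy (pol : B → S → A) (w : B → ℝ) (s : S) (a : A) : ℝ :=
  ∑ h, w h * if pol h s = a then 1 else 0

noncomputable def empiricalWeights [DecidableEq B] {T : ℕ} (ω : Fin T → B) (h : B) : ℝ :=
  (∑ j, if ω j = h then 1 else 0) / T

lemma sum_mixedPolicy (pol : B → S → A) (w : B → ℝ) (s : S) (C : Finset A) :
    ∑ a ∈ C, mixedPolicy pol w s a = ∑ h, w h * if pol h s ∈ C then 1 else 0 := by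
  simp only [mixedPolicy, sum_comm (s := C), ← mul_sum, sum_ite_eq]

lemma sum_empiricalWeights_mul [DecidableEq B] {T : ℕ} (ω : Fin T → B) (g : B → ℝ) :
    ∑ h, empiricalWeights ω h * g h = (∑ j, g (ω j)) / T := by
  simp only [empiricalWeights, div_mul_eq_mul_div, ← sum_div, sum_mul, ite_mul, one_mul, zero_mul]
  rw [sum_comm]
  simp

lemma exists_sum_sub_ge_of_lt_sum_abs [Fintype A] [DecidableEq B] (pol : B → S → A)
    {u : B → ℝ} (hu : ∑ h, u h = 1) {T : ℕ} (hT : T ≠ 0) (ω : Fin T → B) (s : S) {ε : ℝ}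
    (hε : ε < ∑ a, |mixedPolicy pol (empiricalWeights ω) s a - mixedPolicy pol u s a|) :
    ∃ C : Finset A, T * (ε / 2) ≤ ∑ j, ((if pol (ω j) s ∈ C then 1 else 0)
        - ∑ h, u h * if pol h s ∈ C then 1 else 0) := by
  have hT0 : (0:ℝ) < T := by positivity
  have hdiff (C : Finset A) : ∑ a ∈ C, (mixedPolicy pol (empiricalWeights ω) s a
      - mixedPolicy pol u s a) = (∑ j, ((if pol (ω j) s ∈ C then 1 else 0)
        - ∑ h, u h * if pol h s ∈ C then 1 else 0)) / T := by
    rw [sum_sub_distrib, sum_mixedPolicy, sum_mixedPolicy, sum_empiricalWeights_mul,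
      sum_sub_distrib, sum_const, card_univ, Fintype.card_fin, nsmul_eq_mul]
    field_simp
  have hzero : ∑ a, (mixedPolicy pol (empiricalWeights ω) s a - mixedPolicy pol u s a) = 0 := by
    simp [hdiff, hu]
  let C : Finset A := {a | 0 < mixedPolicy pol (empiricalWeights ω) s a - mixedPolicy pol u s a}
  refine ⟨C, ?_⟩
  rw [sum_abs_eq_two_mul_sum_pos _ hzero, hdiff, mul_div_assoc', lt_div_iff₀ hT0] at hε
  linarith

lemma measureReal_exists_sum_abs_mixedPolicy_sub_gt_le [Fintype S] [Fintype A] [DecidableEq B]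
    [MeasurableSpace B] [MeasurableSingletonClass B] (pol : B → S → A) {u : B → ℝ}
    (hu : u ∈ stdSimplex ℝ B) {T : ℕ} (hT : T ≠ 0) {ε : ℝ} (hε : 0 ≤ ε) :
    (Measure.pi fun _ : Fin T => discreteMeasure u).real
        {ω | ∃ s, ε < ∑ a, |mixedPolicy pol (empiricalWeights ω) s a - mixedPolicy pol u s a|}
      ≤ Fintype.card S * 2 ^ Fintype.card A * Real.exp (-(T * ε ^ 2 / 2)) := by
  have := isProbabilityMeasure_discreteMeasure hu
  let g (p : S × Finset A) (h : B) : ℝ := if pol h p.1 ∈ p.2 then 1 else 0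
  let deviation (p : S × Finset A) : Set (Fin T → B) :=
    {ω | T * (ε / 2) ≤ ∑ j, (g p (ω j) - ∫ h, g p h ∂discreteMeasure u)}
  have hcover : {ω | ∃ s, ε < ∑ a,
      |mixedPolicy pol (empiricalWeights ω) s a - mixedPolicy pol u s a|} ⊆ ⋃ p, deviation p := by
    rintro ω ⟨s, hs⟩
    obtain ⟨C, hC⟩ := exists_sum_sub_ge_of_lt_sum_abs pol hu.2 hT ω s hs
    exact Set.mem_iUnion.2 ⟨(s, C), by simpa [deviation, g, integral_discreteMeasure hu.1] using hC⟩
  have hhoeffding (p : S × Finset A) :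
      (Measure.pi fun _ : Fin T => discreteMeasure u).real (deviation p)
        ≤ Real.exp (-(2 * T * (ε / 2) ^ 2)) := by
    have hg (h : B) : g p h ∈ Set.Icc 0 1 := by by_cases hh : pol h p.1 ∈ p.2 <;> simp [g, hh]
    simpa only [Fintype.card_fin] using measureReal_pi_sum_sub_integral_ge_le (ι := Fin T)
      (discreteMeasure u) (measurable_of_finite (g p)) hg (div_nonneg hε zero_le_two)
  calc _ ≤ ∑ p, (Measure.pi fun _ : Fin T => discreteMeasure u).real (deviation p) :=
        (measureReal_mono hcover).trans (measureReal_iUnion_fintype_le _)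
    _ ≤ ∑ _p : S × Finset A, Real.exp (-(2 * T * (ε / 2) ^ 2)) :=
        sum_le_sum fun p _ => hhoeffding p
    _ = _ := by
      rw [sum_const, card_univ, Fintype.card_prod, Fintype.card_finset, nsmul_eq_mul]
      push_cast
      ring_nf

end MixedPolicy

/-- sparsification concentration. If `h_1, …, h_T` are i.i.d.
samples from `u* ∈ Δ(ℬ)` and `u` is the empirical average of the one-hot
vectors, then with probability at least `1 − δ`, simultaneously for every
state `s`, `‖π_u(·|s) − π_{u*}(·|s)‖₁ ≤ √(2A(ln S + ln(2/δ))/T)`. -/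
theorem sparsification_concentration {S A B : Type*}
    [Fintype S] [Fintype A] [Fintype B]
    [Nonempty S] [Nonempty A]
    [DecidableEq A] [DecidableEq B]
    [MeasurableSpace B] [MeasurableSingletonClass B]
    (pol : B → S → A)
    (ustar : B → ℝ) (hu : ustar ∈ stdSimplex ℝ B)
    (T : ℕ) (hT : 1 ≤ T)
    (δ : ℝ) (hδ : δ ∈ Set.Ioc (0:ℝ) 1) :
    ENNReal.ofReal (1 - δ)
      ≤ (Measure.pi fun _ : Fin T => discreteMeasure ustar)
          {ω : Fin T → B | ∀ s : S,
            ∑ a : A,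
              |(∑ h : B, ((∑ j : Fin T, if ω j = h then (1:ℝ) else 0) / T)
                  * (if pol h s = a then (1:ℝ) else 0))
                - (∑ h : B, ustar h * (if pol h s = a then (1:ℝ) else 0))|
            ≤ Real.sqrt (2 * (Fintype.card A)
                * (Real.log (Fintype.card S) + Real.log (2 / δ)) / T)} := by
  have := isProbabilityMeasure_discreteMeasure hu
  set L := Real.log (Fintype.card S) + Real.log (2 / δ)
  set ε := Real.sqrt (2 * Fintype.card A * L / T)
  set P := Measure.pi fun _ : Fin T => discreteMeasure ustar
  set E : Set (Fin T → B) :=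
    {ω | ∀ s, ∑ a, |mixedPolicy pol (empiricalWeights ω) s a - mixedPolicy pol ustar s a| ≤ ε}
  have hL : 0 ≤ L := add_nonneg (Real.log_nonneg (Nat.one_le_cast.2 Fintype.card_pos))
    (Real.log_nonneg (by rw [le_div_iff₀ hδ.1]; linarith [hδ.2]))
  have hε : T * ε ^ 2 / 2 = Fintype.card A * L := by
    rw [Real.sq_sqrt (by positivity)]
    field_simp
  have hcompl : Eᶜ = {ω | ∃ s,
      ε < ∑ a, |mixedPolicy pol (empiricalWeights ω) s a - mixedPolicy pol ustar s a|} := by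
    ext
    simp [E]
  have hbad : P.real Eᶜ ≤ δ := by
    rw [hcompl]
    refine (measureReal_exists_sum_abs_mixedPolicy_sub_gt_le pol hu
      (Nat.one_le_iff_ne_zero.1 hT) (Real.sqrt_nonneg _)).trans ?_
    rw [hε]
    exact card_mul_two_pow_mul_exp_le Fintype.card_pos Fintype.card_pos hδ
  have hsplit := measureReal_union_le (μ := P) E Eᶜ
  rw [Set.union_compl_self, probReal_univ] at hsplit
  change ENNReal.ofReal (1 - δ) ≤ P E
  rw [← ofReal_measureReal]
  exact ENNReal.ofReal_le_ofReal (by linarith)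
end
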